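/- arXiv:2311.07024 — 10 statements merged into one kernel-verified Lean document; each statement's English description precedes it below -/
import Mathlib

section
/- Let R be a commutative ring, M an R-module, a ∈ R, and (φ_n)_{n≥0} a sequence of R-linear endomorphisms of M with φ_0 = id_M. Then the following are equivalent: (1) for every n ≥ 0 and every r ≥ 1 one has Σ_{l,m,k ≥ 0, l+m+k = r} (−1)^l · c(l+n, k) · k! · binom(l+m, l) · binom(l+m+k, k) · a^k · (φ_m ∘ φ_{l+n}) = 0 in End_R(M); (2) for every n ≥ 1, φ_n = ∏_{i=0}^{n-1}(φ_1 − i·a). -/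
/-!
Write `P_m(x, y) = ∏_{i<m} (y - i x)`. Condition (2) says `φ_m = P_m(a, φ_1)`, and
condition (1) for `r = 1` is the recursion `φ_{n+1} = (φ_1 - n a) φ_n`, which gives (1) ⇒ (2).
For the converse it suffices to show that the sums in (1) vanish for `φ_m = P_m(x, y)` with
`x, y` commuting variables over `ℤ`. This is a polynomial identity in `y` over the domain
`ℤ[x]`, so it may be checked at the infinitely many points `y = N x`, `N ≥ n`. There
`P_m(x, N x) = m! binom(N, m) x^m`, and after dividing out `r! n! binom(N, n) x^(r+n)` the sum
becomes the coefficient of `X^r` in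
`(1+X)^N · Σ_l binom(N-n, l) (-X)^l (1+X)^(-l-n) = (1+X)^N (1+X)^(-N) = 1`.
-/

/-- `cCoeff s k` is the coefficient of `X^k` in `(1+X)^{-s} ∈ ℤ[[X]]`:
`c(s,k) = (-1)^k * choose (s+k-1) k` for `s ≥ 1`, `c(0,0) = 1`, `c(0,k) = 0` for `k ≥ 1`. -/
def cCoeff (s k : ℕ) : ℤ :=
  if s = 0 then (if k = 0 then 1 else 0) else (-1) ^ k * ((s + k - 1).choose k : ℤ)

open Finset

theorem cCoeff_zero_right (s : ℕ) : cCoeff s 0 = 1 := by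
  rcases s with _ | s <;> simp [cCoeff]

theorem cCoeff_one_right (s : ℕ) : cCoeff s 1 = -s := by
  rcases s with _ | s <;> simp [cCoeff]

section PowerSeries
open PowerSeries

theorem cCoeff_eq_ringChoose (s k : ℕ) : cCoeff s k = Ring.choose (-(s : ℤ)) k := by
  rcases s with _ | s
  · simp [cCoeff, Ring.choose_zero_ite]
  · rw [Ring.choose_neg, cCoeff, if_neg s.succ_ne_zero, Int.negOnePow_def, Units.smul_def]
    push_cast
    rw [show (s : ℤ) + 1 + k - 1 = ((s + k : ℕ) : ℤ) by push_cast; ring, Ring.choose_natCast,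
      show s + 1 + k - 1 = s + k by omega]
    simp

theorem coeff_binomialSeries_neg (s k : ℕ) :
    coeff k (binomialSeries ℤ (-(s : ℤ))) = cCoeff s k := by
  simp [cCoeff_eq_ringChoose]

theorem coeff_one_add_X_pow (N k : ℕ) : coeff k ((1 + X : ℤ⟦X⟧) ^ N) = N.choose k := by
  rw [← binomialSeries_nat (R := ℤ), binomialSeries_coeff, Ring.choose_natCast]
  simp

theorem one_add_X_pow_mul_sum_eq_one (n K : ℕ) :
    (1 + X : ℤ⟦X⟧) ^ (n + K) * ∑ l ∈ range (K + 1),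
      (K.choose l : ℤ⟦X⟧) * (-X) ^ l * binomialSeries ℤ (-((l + n : ℕ) : ℤ)) = 1 := by
  have hterm : ∀ l ∈ range (K + 1), (1 + X : ℤ⟦X⟧) ^ (n + K) *
      ((K.choose l : ℤ⟦X⟧) * (-X) ^ l * binomialSeries ℤ (-((l + n : ℕ) : ℤ))) =
      (-X : ℤ⟦X⟧) ^ l * (1 + X) ^ (K - l) * (K.choose l : ℤ⟦X⟧) := by
    intro l hl
    have hlK : l ≤ K := Nat.lt_succ_iff.mp (mem_range.mp hl)
    have hexp : ((n + K : ℕ) : ℤ) + -((l + n : ℕ) : ℤ) = ((K - l : ℕ) : ℤ) := by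
      push_cast [hlK]; ring
    rw [← binomialSeries_nat (R := ℤ), ← binomialSeries_nat (R := ℤ) (K - l), ← hexp,
      binomialSeries_add]
    ring
  rw [mul_sum, sum_congr rfl hterm, ← add_pow]
  simp

theorem coeff_one_add_X_pow_mul_binomialSeries (n K l r : ℕ) :
    coeff r ((1 + X : ℤ⟦X⟧) ^ (n + K) *
      ((K.choose l : ℤ⟦X⟧) * (-X) ^ l * binomialSeries ℤ (-((l + n : ℕ) : ℤ)))) =
      (-1 : ℤ) ^ l * K.choose l *
        ∑ j ∈ range (r + 1 - l), ((n + K).choose j : ℤ) * cCoeff (l + n) (r - l - j) := by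
  have hC : (1 + X : ℤ⟦X⟧) ^ (n + K) *
      ((K.choose l : ℤ⟦X⟧) * (-X) ^ l * binomialSeries ℤ (-((l + n : ℕ) : ℤ))) =
      C ((-1 : ℤ) ^ l * K.choose l) * (X ^ l * ((1 + X) ^ (n + K) *
        binomialSeries ℤ (-((l + n : ℕ) : ℤ)))) := by
    rw [neg_pow, map_mul, map_pow, map_neg, map_one, map_natCast]
    ring
  rw [hC, coeff_C_mul, coeff_X_pow_mul']
  split_ifs with hlr
  · rw [coeff_mul, Nat.sum_antidiagonal_eq_sum_range_succ
      (fun i j => coeff i ((1 + X : ℤ⟦X⟧) ^ (n + K)) * coeff j (binomialSeries ℤ _)),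
      show (r - l).succ = r + 1 - l by omega]
    simp only [coeff_one_add_X_pow, coeff_binomialSeries_neg, Nat.sub_sub]
  · simp [show r + 1 - l = 0 by omega]

theorem sum_cCoeff_mul_choose_eq_zero (n K r : ℕ) (hr : 1 ≤ r) :
    ∑ l ∈ range (r + 1), ∑ j ∈ range (r + 1 - l),
      (-1) ^ l * cCoeff (l + n) (r - l - j) * ((n + K).choose j * K.choose l : ℤ) = 0 := by
  have h := congrArg (coeff r) (one_add_X_pow_mul_sum_eq_one n K)
  rw [mul_sum, map_sum, coeff_one, if_neg (by omega)] at h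
  simp only [coeff_one_add_X_pow_mul_binomialSeries] at h
  set g : ℕ → ℤ := fun l => (-1) ^ l * K.choose l *
    ∑ j ∈ range (r + 1 - l), ((n + K).choose j : ℤ) * cCoeff (l + n) (r - l - j)
  have hextend : ∀ s t, s ≤ t → (∀ l, s ≤ l → g l = 0) →
      ∑ l ∈ range s, g l = ∑ l ∈ range t, g l :=
    fun s t hst hg => sum_subset (range_subset_range.2 hst) fun l _ hl => hg l (by simpa using hl)
  calc _ = ∑ l ∈ range (r + 1), g l := by
        refine sum_congr rfl fun l _ => ?_
        simp only [g, mul_sum]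
        exact sum_congr rfl fun j _ => by ring
    _ = ∑ l ∈ range (r + 1 + K), g l :=
        hextend _ _ (by omega) fun l hl => by simp [g, show r + 1 - l = 0 by omega]
    _ = ∑ l ∈ range (K + 1), g l := by
        refine (hextend _ _ (by omega) fun l hl => ?_).symm
        simp [g, Nat.choose_eq_zero_of_lt (show K < l by omega)]
    _ = 0 := h

end PowerSeries

section FallingProd
variable {A B : Type*} [CommRing A] [CommRing B]

def fallingProd (x y : A) (m : ℕ) : A := ∏ i ∈ range m, (y - i * x)

theorem fallingProd_succ (x y : A) (m : ℕ) :
    fallingProd x y (m + 1) = fallingProd x y m * (y - m * x) :=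
  prod_range_succ _ _

theorem map_fallingProd (f : A →+* B) (x y : A) (m : ℕ) :
    f (fallingProd x y m) = fallingProd (f x) (f y) m := by
  simp [fallingProd, map_prod]

theorem fallingProd_natCast_mul (x : A) (N m : ℕ) :
    fallingProd x (N * x) m = N.descFactorial m * x ^ m := by
  calc fallingProd x (N * x) m = ∏ i ∈ range m, ((N : A) - i) * x :=
        prod_congr rfl fun i _ => by ring
    _ = N.descFactorial m * x ^ m := by
      rw [prod_mul_distrib, prod_const, card_range, ← descPochhammer_eval_eq_prod_range,
        descPochhammer_eval_eq_descFactorial]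

end FallingProd

def cocycleCoeff (n l j k : ℕ) : ℤ :=
  (-1) ^ l * cCoeff (l + n) k * k.factorial * (l + j).choose l * (l + j + k).choose k

theorem cocycleCoeff_mul_descFactorial (n K l j k : ℕ) :
    cocycleCoeff n l j k * ((n + K).descFactorial j * (n + K).descFactorial (l + n)) =
      (l + j + k).factorial * n.factorial * (n + K).choose n *
        ((-1) ^ l * cCoeff (l + n) k * ((n + K).choose j * K.choose l)) := by
  have h1 : (l + j).choose l * l.factorial * j.factorial = (l + j).factorial := by
    rw [Nat.choose_symm_add, Nat.add_choose_mul_factorial_mul_factorial]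
  have h2 := Nat.add_choose_mul_factorial_mul_factorial (l + j) k
  have h3 := Nat.add_choose_mul_factorial_mul_factorial l n
  have h4 : (n + K).choose (l + n) * (l + n).choose n = (n + K).choose n * K.choose l := by
    rw [Nat.choose_mul (Nat.le_add_left n l)]; simp
  simp only [cocycleCoeff, Nat.descFactorial_eq_factorial_mul_choose]
  rw [← h3]
  zify at h1 h2 h4
  push_cast
  linear_combination
    (-1) ^ l * cCoeff (l + n) k * ((n + K).choose j : ℤ) * n.factorial * k.factorial *
      ((l + j + k).choose k : ℤ) * (((n + K).choose (l + n) : ℤ) * (l + n).choose n * h1 +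
        (l + j).factorial * h4) +
    (-1) ^ l * cCoeff (l + n) k * ((n + K).choose j : ℤ) * n.factorial * (n + K).choose n *
      K.choose l * h2

section CocycleSum
variable {R S T : Type*} [CommRing R] [Ring S] [Algebra R S] [Ring T] [Algebra R T]

def cocycleSum (a : R) (P : ℕ → S) (n r : ℕ) : S :=
  ∑ l ∈ range (r + 1), ∑ j ∈ range (r + 1 - l),
    cocycleCoeff n l j (r - l - j) • (a ^ (r - l - j) • (P j * P (l + n)))

theorem map_cocycleSum (f : S →ₐ[R] T) (a : R) (P : ℕ → S) (n r : ℕ) :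
    f (cocycleSum a P n r) = cocycleSum a (fun j => f (P j)) n r := by
  simp [cocycleSum]

theorem cocycleSum_one (a : R) {P : ℕ → S} (hP0 : P 0 = 1) (n : ℕ) :
    cocycleSum a P n 1 = (P 1 - (n * a) • 1) * P n - P (n + 1) :=
  calc cocycleSum a P n 1 = -(a • (n * P n)) + P 1 * P n + -P (n + 1) := by
        simp [cocycleSum, cocycleCoeff, sum_range_succ, hP0, cCoeff_zero_right, cCoeff_one_right,
          add_comm 1 n]
    _ = (P 1 - (n * a) • 1) * P n - P (n + 1) := by
        rw [sub_mul, smul_one_mul, mul_smul, ← nsmul_eq_mul, ← Nat.cast_smul_eq_nsmul R,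
          smul_comm]
        abel

end CocycleSum

section CommRing
variable {A B : Type*} [CommRing A] [CommRing B]

theorem cocycleSum_algebraMap [Algebra A B] (a : A) (P : ℕ → B) (n r : ℕ) :
    cocycleSum (algebraMap A B a) P n r = cocycleSum a P n r := by
  simp only [cocycleSum, ← map_pow, algebraMap_smul]

protected theorem RingHom.map_cocycleSum (f : A →+* B) (x : A) (P : ℕ → A) (n r : ℕ) :
    f (cocycleSum x P n r) = cocycleSum (f x) (fun j => f (P j)) n r := by
  simp [cocycleSum]

theorem cocycleSum_fallingProd_natCast_mul (x : A) (n K r : ℕ) (hr : 1 ≤ r) :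
    cocycleSum x (fallingProd x ((n + K : ℕ) * x)) n r = 0 := by
  have hterm : ∀ l ∈ range (r + 1), ∀ j ∈ range (r + 1 - l),
      cocycleCoeff n l j (r - l - j) • (x ^ (r - l - j) •
        (fallingProd x ((n + K : ℕ) * x) j * fallingProd x ((n + K : ℕ) * x) (l + n))) =
      (r.factorial * n.factorial * (n + K).choose n *
        ((-1) ^ l * cCoeff (l + n) (r - l - j) * ((n + K).choose j * K.choose l)) : ℤ) •
          x ^ (r + n) := by
    intro l hl j hj
    have hk : l + j + (r - l - j) = r := by simp only [mem_range] at hl hj; omega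
    have hc := congrArg (Int.cast : ℤ → A) (cocycleCoeff_mul_descFactorial n K l j (r - l - j))
    rw [hk] at hc
    push_cast at hc
    rw [fallingProd_natCast_mul, fallingProd_natCast_mul, zsmul_eq_mul, zsmul_eq_mul,
      smul_eq_mul, show r + n = (r - l - j) + j + (l + n) by omega, pow_add, pow_add]
    push_cast
    linear_combination x ^ (r - l - j) * x ^ j * x ^ (l + n) * hc
  rw [cocycleSum, sum_congr rfl fun l hl => sum_congr rfl (hterm l hl)]
  simp_rw [← sum_smul, ← mul_sum, sum_cCoeff_mul_choose_eq_zero n K r hr, mul_zero, zero_smul]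

open Polynomial in
theorem cocycleSum_fallingProd (x y : A) (n r : ℕ) (hr : 1 ≤ r) :
    cocycleSum x (fallingProd x y) n r = 0 := by
  have hQ : cocycleSum (C X : ℤ[X][X]) (fallingProd (C X) X : ℕ → ℤ[X][X]) n r = 0 := by
    refine eq_zero_of_infinite_isRoot _ <| Set.infinite_of_injective_forall_mem
      (f := fun K : ℕ => ((n + K : ℕ) : ℤ[X]) * X) (fun K K' h => ?_) fun K => ?_
    · have := Nat.cast_injective (mul_right_cancel₀ X_ne_zero h)
      omega
    · rw [Set.mem_ofPred_eq, IsRoot.def, ← coe_evalRingHom, RingHom.map_cocycleSum]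
      simpa [map_fallingProd] using cocycleSum_fallingProd_natCast_mul X n K r hr
  simpa [hQ, map_fallingProd] using
    ((eval₂RingHom (eval₂RingHom (Int.castRingHom A) x) y).map_cocycleSum (C X)
      (fallingProd (C X) X) n r).symm

end CommRing

section Algebra
open Polynomial
variable {R S : Type*} [CommRing R] [Ring S] [Algebra R S]

theorem aeval_X_sub_natCast_mul_C (s : S) (a : R) (i : ℕ) :
    aeval s (X - (i : R[X]) * C a) = s - ((i : R) * a) • 1 := by
  rw [map_sub, aeval_X, map_mul, map_natCast, aeval_C, ← map_natCast (algebraMap R S),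
    ← map_mul, Algebra.algebraMap_eq_smul_one]

theorem aeval_fallingProd (s : S) (a : R) (m : ℕ) :
    aeval s (fallingProd (C a) X m) =
      ((List.range m).map (fun i : ℕ => s - ((i : R) * a) • 1)).prod := by
  induction m with
  | zero => simp [fallingProd]
  | succ m ih =>
    rw [fallingProd_succ, map_mul, ih, aeval_X_sub_natCast_mul_C, List.range_succ,
      List.map_append, List.prod_append, List.map_singleton, List.prod_singleton]

theorem cocycleSum_aeval_fallingProd (s : S) (a : R) (n r : ℕ) (hr : 1 ≤ r) :
    cocycleSum a (fun j => aeval s (fallingProd (C a) X j)) n r = 0 := by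
  rw [← map_cocycleSum, ← cocycleSum_algebraMap, algebraMap_eq,
    cocycleSum_fallingProd _ _ n r hr, map_zero]

theorem eq_aeval_fallingProd_of_cocycleSum_one (a : R) {P : ℕ → S} (hP0 : P 0 = 1)
    (h : ∀ n, cocycleSum a P n 1 = 0) (n : ℕ) : P n = aeval (P 1) (fallingProd (C a) X n) := by
  induction n with
  | zero => simp [fallingProd, hP0]
  | succ n ih =>
    rw [fallingProd_succ, mul_comm, map_mul, ← ih, aeval_X_sub_natCast_mul_C,
      ← sub_eq_zero.mp ((cocycleSum_one a hP0 n).symm.trans (h n))]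

end Algebra

/-- the cocycle condition in coefficientwise form is equivalent to
`φ n = ∏_{i=0}^{n-1} (φ 1 - i·a)`. -/
theorem statement0 {R M : Type*} [CommRing R] [AddCommGroup M] [Module R M]
    (a : R) (φ : ℕ → Module.End R M) (hφ0 : φ 0 = 1) :
    (∀ n r : ℕ, 1 ≤ r →
        ∑ l ∈ Finset.range (r + 1), ∑ j ∈ Finset.range (r + 1 - l),
          ((-1 : ℤ) ^ l * cCoeff (l + n) (r - l - j) * ((r - l - j).factorial : ℤ) *
              ((l + j).choose l : ℤ) * ((l + j + (r - l - j)).choose (r - l - j) : ℤ)) •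
            (a ^ (r - l - j) • (φ j * φ (l + n))) = 0) ↔
      (∀ n : ℕ, 1 ≤ n →
        φ n = ((List.range n).map (fun i => φ 1 - (((i : ℕ) : R) * a) • 1)).prod) := by
  change (∀ n r : ℕ, 1 ≤ r → cocycleSum a φ n r = 0) ↔ _
  simp_rw [← aeval_fallingProd]
  constructor
  · exact fun H n _ => eq_aeval_fallingProd_of_cocycleSum_one a hφ0 (fun n => H n 1 le_rfl) n
  · intro H n r hr
    have hφ : φ = fun j =>
        Polynomial.aeval (φ 1) (fallingProd (Polynomial.C a) Polynomial.X j) := by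
      funext j
      rcases j with _ | j
      · simp [fallingProd, hφ0]
      · exact H _ j.succ_pos
    rw [hφ]
    exact cocycleSum_aeval_fallingProd _ a n r hr
end

section
/- For every commutative ring R, all elements y, a ∈ R, and every integer r ≥ 1, one has Σ_{l,m,k ≥ 0, l+m+k = r} (−1)^l · c(l, k) · k! · binom(l+m, l) · binom(l+m+k, k) · a^k · (∏_{j=0}^{l-1}(y − j·a)) · (∏_{i=0}^{m-1}(y − i·a)) = 0 in R. -/
open Finset
open scoped Nat

-- The `s ≥ 1` formula also covers `s = 0`: `C(k-1,k) = 0` for `k ≥ 1`, and `0 - 1 = 0` in `ℕ`.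
lemma cCoeff_eq_neg_one_pow_mul_choose (l k : ℕ) :
    cCoeff l k = (-1) ^ k * ((l + k - 1).choose k : ℤ) := by
  unfold cCoeff
  split_ifs with hl hk
  · simp [hl, hk]
  · rw [Nat.choose_eq_zero_of_lt (by omega)]
    simp
  · rfl

lemma cCoeff_mul_choose_eq (l m k : ℕ) :
    (-1) ^ l * cCoeff l k * (k ! : ℤ) * ((l + m).choose l : ℤ) * ((l + m + k).choose k : ℤ) =
      (-1) ^ (l + k) * ((l + k + m).choose (l + k) : ℤ) * ((l + k).choose l : ℤ) *
        ((l + k - 1).descFactorial k : ℤ) := by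
  have choose_mul_choose :
      ((l + m).choose l : ℤ) * ((l + m + k).choose k : ℤ) =
        ((l + k + m).choose (l + k) : ℤ) * ((l + k).choose l : ℤ) := by
    norm_cast
    rw [Nat.choose_symm_add (a := l) (b := k), Nat.choose_mul (Nat.le_add_left k l),
      show l + k + m - k = l + m by omega, Nat.add_sub_cancel, add_right_comm, mul_comm]
  rw [cCoeff_eq_neg_one_pow_mul_choose, Nat.descFactorial_eq_factorial_mul_choose, pow_add]
  push_cast
  linear_combination (-1) ^ l * (-1) ^ k * ((l + k - 1).choose k : ℤ) * (k ! : ℤ) *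
    choose_mul_choose

lemma sum_range_sum_range_eq_sum_antidiagonal {M : Type*} [AddCommMonoid M]
    (f : ℕ → ℕ → ℕ → M) (r : ℕ) :
    ∑ l ∈ range (r + 1), ∑ m ∈ range (r + 1 - l), f l m (r - l - m) =
      ∑ p ∈ antidiagonal r, ∑ q ∈ antidiagonal p.1, f q.1 p.2 q.2 := by
  rw [sum_comm' (t' := range (r + 1)) (s' := fun m => range (r + 1 - m))
    (fun l m => by simp only [mem_range]; omega), ← Nat.sum_antidiagonal_swap,
    Nat.sum_antidiagonal_eq_sum_range_succ_mk]
  refine sum_congr rfl fun m hm => ?_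
  rw [mem_range] at hm
  rw [Nat.sum_antidiagonal_eq_sum_range_succ_mk, show r + 1 - m = (r - m).succ by omega]
  exact sum_congr rfl fun l _ => by simp only [Prod.swap]; rw [show r - l - m = r - m - l by omega]

section DescFactorialStep

variable {R : Type*} [CommRing R]

def descFactorialStep (x a : R) (n : ℕ) : R :=
  ∏ i ∈ range n, (x - i * a)

lemma descFactorialStep_succ (x a : R) (n : ℕ) :
    descFactorialStep x a (n + 1) = descFactorialStep x a n * (x - n * a) :=
  prod_range_succ _ _

lemma descFactorialStep_zero_left (a : R) {n : ℕ} (hn : n ≠ 0) : descFactorialStep 0 a n = 0 :=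
  prod_eq_zero (mem_range.2 (Nat.pos_of_ne_zero hn)) (by simp)

lemma descFactorialStep_mul_self (x a : R) (n : ℕ) :
    descFactorialStep (x * a) a n = (descPochhammer R n).eval x * a ^ n := by
  simp_rw [descFactorialStep, ← sub_mul, prod_mul_distrib, prod_const, card_range,
    descPochhammer_eval_eq_prod_range]

lemma descFactorialStep_add (x z a : R) (n : ℕ) :
    descFactorialStep (x + z) a n =
      ∑ ij ∈ antidiagonal n,
        (n.choose ij.1 : R) * (descFactorialStep x a ij.1 * descFactorialStep z a ij.2) := by
  induction n with
  | zero => simp [descFactorialStep]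
  | succ n ih =>
    rw [sum_antidiagonal_choose_succ_mul (fun i j => descFactorialStep x a i * descFactorialStep z a j),
      descFactorialStep_succ, ih, sum_mul, ← sum_add_distrib]
    refine sum_congr rfl fun ij hij => ?_
    replace hij : ij.1 + ij.2 = n := mem_antidiagonal.1 hij
    rw [Nat.choose_symm_of_eq_add hij.symm, descFactorialStep_succ, descFactorialStep_succ, ← hij]
    push_cast
    ring

lemma descFactorialStep_neg (y a : R) (n : ℕ) :
    descFactorialStep (-y) a n = (-1) ^ n * descFactorialStep (y + (n - 1 : ℕ) * a) a n := by
  have reflect : descFactorialStep (y + (n - 1 : ℕ) * a) a n = ∏ i ∈ range n, (y + i * a) := by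
    rw [descFactorialStep, ← prod_range_reflect (fun i => y + (i : R) * a) n]
    refine prod_congr rfl fun i hi => ?_
    rw [Nat.cast_sub (by rw [mem_range] at hi; omega : i ≤ n - 1)]
    ring
  rw [reflect, descFactorialStep]
  simp_rw [← neg_add', prod_neg, card_range]

lemma descFactorialStep_neg_eq_sum (y a : R) (n : ℕ) :
    descFactorialStep (-y) a n =
      ∑ lk ∈ antidiagonal n,
        ((-1) ^ n * (n.choose lk.1 : R) * ((n - 1).descFactorial lk.2 : R)) *
          (a ^ lk.2 * descFactorialStep y a lk.1) := by
  rw [descFactorialStep_neg, descFactorialStep_add, mul_sum]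
  refine sum_congr rfl fun lk _ => ?_
  rw [descFactorialStep_mul_self, descPochhammer_eval_eq_descFactorial]
  ring


lemma sum_antidiagonal_cCoeff_smul (y a : R) (n m : ℕ) :
    ∑ lk ∈ antidiagonal n,
      ((-1 : ℤ) ^ lk.1 * cCoeff lk.1 lk.2 * (lk.2 ! : ℤ) * ((lk.1 + m).choose lk.1 : ℤ) *
          ((lk.1 + m + lk.2).choose lk.2 : ℤ)) •
        (a ^ lk.2 * descFactorialStep y a lk.1 * descFactorialStep y a m) =
      ((n + m).choose n : R) * (descFactorialStep (-y) a n * descFactorialStep y a m) := by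
  rw [descFactorialStep_neg_eq_sum, sum_mul, mul_sum]
  refine sum_congr rfl fun lk hlk => ?_
  replace hlk : lk.1 + lk.2 = n := mem_antidiagonal.1 hlk
  rw [zsmul_eq_mul, ← hlk, cCoeff_mul_choose_eq]
  push_cast
  ring

end DescFactorialStep

/-- the coefficientwise form of `(1+aX)^{Y/a} · (1+aX)^{-Y/a} = 1`. -/
theorem statement1 {R : Type*} [CommRing R] (y a : R) (r : ℕ) (hr : 1 ≤ r) :
    ∑ l ∈ Finset.range (r + 1), ∑ m ∈ Finset.range (r + 1 - l),
      ((-1 : ℤ) ^ l * cCoeff l (r - l - m) * ((r - l - m).factorial : ℤ) *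
          ((l + m).choose l : ℤ) * ((l + m + (r - l - m)).choose (r - l - m) : ℤ)) •
        (a ^ (r - l - m) *
          (∏ t ∈ Finset.range l, (y - (t : R) * a)) *
          (∏ i ∈ Finset.range m, (y - (i : R) * a))) = 0 := by
  refine (sum_range_sum_range_eq_sum_antidiagonal (fun l m k =>
    ((-1 : ℤ) ^ l * cCoeff l k * (k ! : ℤ) * ((l + m).choose l : ℤ) * ((l + m + k).choose k : ℤ)) •
      (a ^ k * descFactorialStep y a l * descFactorialStep y a m)) r).trans ?_
  calc _ = ∑ p ∈ antidiagonal r,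
        (r.choose p.1 : R) * (descFactorialStep (-y) a p.1 * descFactorialStep y a p.2) :=
        sum_congr rfl fun p hp => by
          rw [← mem_antidiagonal.1 hp]; exact sum_antidiagonal_cCoeff_smul y a p.1 p.2
    _ = descFactorialStep (-y + y) a r := (descFactorialStep_add _ _ _ _).symm
    _ = 0 := by rw [neg_add_cancel, descFactorialStep_zero_left _ (by omega)]
end

section
/- With notation as in the context, in the two-variable power series ring B[[X₁,X₂]] one has e(X₁) · (e∘g) = e(X₂), where e∘g denotes the power series obtained by substituting g := (1+a·X₁)^{−1}·(X₂ − X₁) for the variable of e. -/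
/-!
The series `e = (1 + aX)^{y/a}` is characterised by `(1 + aX) e' = y e` and `e(0) = 1`. By the
chain rule, `F = e(X₁) · e(g)` and `G = e(X₂)` then satisfy the same first-order system
`(1 + aX₂) ∂₁ = 0`, `(1 + aX₂) ∂₂ = y`: for `F` this uses `(1 + aX₁)(1 + a g) = 1 + aX₂`,
`(1 + aX₁) ∂₁g = -(1 + a g)` and `(1 + aX₁) ∂₂g = 1`. Since `G` is a unit, `F G⁻¹` has vanishing
partial derivatives and constant term `1`, so it equals `1` because `B` is torsion free.
The variables `X₁, X₂` are `X 0, X 1` below.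
-/

open scoped Classical

/-- `e = (1+aX)^{y/a} := Σ_{n≥0} (∏_{i=0}^{n-1}(y - i·a)) · Xⁿ/n!` in `B[[X]]`. -/
noncomputable def eSer {B : Type*} [CommRing B] [Algebra ℚ B] (y a : B) : PowerSeries B :=
  PowerSeries.mk fun n => ((n.factorial : ℚ)⁻¹) • ∏ i ∈ Finset.range n, (y - (i : B) * a)

/-- Substitution of a two-variable power series `g` (with zero constant coefficient) into a
one-variable power series `f`: the coefficient of `f ∘ g` at a monomial `d` is the (finite) sum
`Σ_{n ≤ |d|} f_n · coeff_d (gⁿ)`, which is the full sum `Σ_n f_n · coeff_d (gⁿ)` since `gⁿ` has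
no monomials of total degree `< n` when `g` has zero constant coefficient. -/
noncomputable def substPS {B : Type*} [CommRing B] (f : PowerSeries B)
    (g : MvPowerSeries (Fin 2) B) : MvPowerSeries (Fin 2) B :=
  fun d => ∑ n ∈ Finset.range (d.sum (fun _ k => k) + 1),
    (PowerSeries.coeff n f) * MvPowerSeries.coeff d (g ^ n)

namespace MvPowerSeries

variable {σ R : Type*} [CommRing R]

theorem coeff_pow_eq_zero_of_degree_lt {h : MvPowerSeries σ R} (hh : constantCoeff h = 0)
    {d : σ →₀ ℕ} {n : ℕ} (hd : d.degree < n) : coeff d (h ^ n) = 0 :=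
  coeff_of_lt_order <| (Nat.cast_lt.2 hd).trans_le (le_order_pow_of_constantCoeff_eq_zero n hh)

theorem coeff_subst_trunc {h : MvPowerSeries σ R} (hh : constantCoeff h = 0) (f : PowerSeries R)
    {d : σ →₀ ℕ} {N : ℕ} (hd : d.degree < N) :
    coeff d ((PowerSeries.trunc N f : PowerSeries R).subst h) = coeff d (f.subst h) := by
  have hs := PowerSeries.HasSubst.of_constantCoeff_zero hh
  rw [PowerSeries.coeff_subst hs, PowerSeries.coeff_subst hs]
  refine finsum_congr fun n => ?_
  rw [Polynomial.coeff_coe, PowerSeries.coeff_trunc]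
  split_ifs with hn
  · rfl
  · rw [coeff_pow_eq_zero_of_degree_lt hh (by omega), smul_zero, smul_zero]

theorem constantCoeff_subst_of_constantCoeff_eq_zero {h : MvPowerSeries σ R}
    (hh : constantCoeff h = 0) (f : PowerSeries R) :
    constantCoeff (f.subst h) = PowerSeries.constantCoeff f := by
  rw [← coeff_zero_eq_constantCoeff_apply, PowerSeries.coeff_subst
    (PowerSeries.HasSubst.of_constantCoeff_zero hh), finsum_eq_single _ 0]
  · simp
  · intro n hn
    rw [coeff_pow_eq_zero_of_degree_lt hh (by simpa [Nat.pos_iff_ne_zero]), smul_zero]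

theorem pderiv_subst_coe {h : MvPowerSeries σ R} (hh : PowerSeries.HasSubst h)
    (p : Polynomial R) (i : σ) :
    pderiv R i ((p : PowerSeries R).subst h)
      = (PowerSeries.derivative R p).subst h * pderiv R i h := by
  rw [PowerSeries.subst_coe hh, PowerSeries.derivative_coe, PowerSeries.subst_coe hh,
    Derivation.comp_aeval_eq, smul_eq_mul]

theorem pderiv_subst {h : MvPowerSeries σ R} (hh : constantCoeff h = 0)
    (f : PowerSeries R) (i : σ) :
    pderiv R i (f.subst h) = (PowerSeries.derivative R f).subst h * pderiv R i h := by
  ext d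
  have hdeg : (d + Finsupp.single i 1).degree < d.degree + 1 + 1 := by simp
  rw [coeff_pderiv, ← coeff_subst_trunc hh f hdeg, ← coeff_pderiv,
    pderiv_subst_coe (PowerSeries.HasSubst.of_constantCoeff_zero hh), coeff_mul, coeff_mul]
  refine Finset.sum_congr rfl fun uv huv => ?_
  have hu : uv.1.degree < d.degree + 1 := by
    rw [Finset.HasAntidiagonal.mem_antidiagonal] at huv
    have := congrArg Finsupp.degree huv
    rw [map_add] at this
    omega
  rw [PowerSeries.derivative_coe, ← PowerSeries.trunc_derivative, coeff_subst_trunc hh _ hu]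

theorem eq_of_mul_pderiv_eq_mul [IsAddTorsionFree R] {w F G : MvPowerSeries σ R}
    (c : σ → MvPowerSeries σ R) (hw : IsUnit w) (hF : ∀ i, w * pderiv R i F = c i * F)
    (hG : ∀ i, w * pderiv R i G = c i * G) (hG0 : IsUnit (constantCoeff G))
    (h0 : constantCoeff F = constantCoeff G) : F = G := by
  obtain ⟨u, rfl⟩ := isUnit_iff_constantCoeff.2 hG0
  have hFu : F * ↑u⁻¹ = 1 := by
    refine pderiv.ext (fun i => ?_) ?_
    · rw [pderiv_one, ← hw.mul_right_eq_zero, Derivation.leibniz, pderiv_inv, smul_eq_mul,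
        smul_eq_mul]
      linear_combination (↑u⁻¹ : MvPowerSeries σ R) * hF i
        - F * (↑u⁻¹ : MvPowerSeries σ R) ^ 2 * hG i
        - F * c i * (↑u⁻¹ : MvPowerSeries σ R) * u.inv_mul
    · rw [map_mul, h0, ← map_mul, u.mul_inv, map_one]
  rw [← mul_one F, ← u.inv_mul, ← mul_assoc, hFu, one_mul]

section Cocycle

variable {g : MvPowerSeries (Fin 2) R} {a : R}

theorem constantCoeff_eq_zero_of_mul_eq_X_sub_X (hg : (1 + C a * X 0) * g = X 1 - X 0) :
    constantCoeff g = 0 := by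
  simpa using congrArg constantCoeff hg

theorem mul_pderiv_zero_of_mul_eq_X_sub_X (hg : (1 + C a * X 0) * g = X 1 - X 0) :
    (1 + C a * X 0) * pderiv R 0 g = -(1 + C a * g) := by
  have h := congrArg (pderiv R 0) hg
  simp only [Derivation.leibniz, smul_eq_mul, map_add, map_sub, Derivation.map_one_eq_zero,
    pderiv_C, pderiv_X_self, pderiv_X_of_ne one_ne_zero, mul_one, mul_zero, add_zero,
    zero_add, zero_sub] at h
  linear_combination h

theorem mul_pderiv_one_of_mul_eq_X_sub_X (hg : (1 + C a * X 0) * g = X 1 - X 0) :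
    (1 + C a * X 0) * pderiv R 1 g = 1 := by
  have h := congrArg (pderiv R 1) hg
  simp only [Derivation.leibniz, smul_eq_mul, map_add, map_sub, Derivation.map_one_eq_zero,
    pderiv_C, pderiv_X_self, pderiv_X_of_ne zero_ne_one, mul_zero, add_zero, sub_zero] at h
  linear_combination h

end Cocycle

end MvPowerSeries

open MvPowerSeries in
theorem substPS_eq_subst {R : Type*} [CommRing R] {h : MvPowerSeries (Fin 2) R}
    (hh : constantCoeff h = 0) (f : PowerSeries R) : substPS f h = f.subst h := by
  ext d
  rw [PowerSeries.coeff_subst (PowerSeries.HasSubst.of_constantCoeff_zero hh),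
    finsum_eq_sum_of_support_subset (s := Finset.range (d.degree + 1))]
  · rfl
  · intro n hn
    rw [Finset.coe_range, Set.mem_Iio]
    by_contra hlt
    exact hn (by dsimp only; rw [coeff_pow_eq_zero_of_degree_lt hh (by omega), smul_zero])

section

open MvPowerSeries

variable {B : Type*} [CommRing B] [Algebra ℚ B]

theorem coeff_eSer (y a : B) (n : ℕ) :
    PowerSeries.coeff n (eSer y a) = (n.factorial : ℚ)⁻¹ • ∏ i ∈ Finset.range n, (y - i * a) :=
  PowerSeries.coeff_mk _ _

theorem succ_mul_coeff_eSer_succ (y a : B) (n : ℕ) :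
    (n + 1) * PowerSeries.coeff (n + 1) (eSer y a) = (y - n * a) * PowerSeries.coeff n (eSer y a) := by
  have hq : ((n + 1 : ℚ)) * ((n + 1).factorial : ℚ)⁻¹ = (n.factorial : ℚ)⁻¹ := by
    rw [Nat.factorial_succ]; push_cast; field_simp
  rw [coeff_eSer, coeff_eSer, Finset.prod_range_succ,
    show (n : B) + 1 = algebraMap ℚ B (n + 1) by simp, ← Algebra.smul_def, smul_smul, hq,
    mul_smul_comm, mul_comm]

theorem constantCoeff_eSer (y a : B) : PowerSeries.constantCoeff (eSer y a) = 1 := by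
  rw [← PowerSeries.coeff_zero_eq_constantCoeff_apply, coeff_eSer]; simp

theorem one_add_mul_derivative_eSer (y a : B) :
    (1 + PowerSeries.C a * PowerSeries.X) * PowerSeries.derivative B (eSer y a)
      = PowerSeries.C y * eSer y a := by
  ext n
  rw [add_mul, one_mul, mul_assoc, map_add, PowerSeries.coeff_C_mul, PowerSeries.coeff_C_mul,
    PowerSeries.coeff_derivative]
  rcases n with _ | n
  · rw [PowerSeries.coeff_zero_X_mul]
    linear_combination succ_mul_coeff_eSer_succ y a 0
  · rw [PowerSeries.coeff_succ_X_mul, PowerSeries.coeff_derivative]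
    have h := succ_mul_coeff_eSer_succ y a (n + 1)
    push_cast at h ⊢
    linear_combination h

theorem one_add_mul_pderiv_subst_eSer {σ : Type*} (y a : B) {h : MvPowerSeries σ B}
    (hh : constantCoeff h = 0) (i : σ) :
    (1 + C a * h) * pderiv B i ((eSer y a).subst h) = C y * pderiv B i h * (eSer y a).subst h := by
  have hs := PowerSeries.HasSubst.of_constantCoeff_zero hh
  have hode := congrArg (PowerSeries.substAlgHom hs) (one_add_mul_derivative_eSer y a)
  simp only [map_mul, map_add, map_one, PowerSeries.substAlgHom_X,
    PowerSeries.coe_substAlgHom, PowerSeries.subst_C] at hode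
  rw [pderiv_subst hh]
  linear_combination pderiv B i h * hode

theorem mul_pderiv_subst_X_mul_subst_eSer {g : MvPowerSeries (Fin 2) B} (y a : B)
    (hg : (1 + C a * X 0) * g = X 1 - X 0) (i : Fin 2) :
    (1 + C a * X 1) * pderiv B i ((eSer y a).subst (X 0) * (eSer y a).subst g)
      = ![0, C y] i * ((eSer y a).subst (X 0) * (eSer y a).subst g) := by
  have hg0 := constantCoeff_eq_zero_of_mul_eq_X_sub_X hg
  have hQ : 1 + C a * X 1 = (1 + C a * X 0) * (1 + C a * g) := by linear_combination -C a * hg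
  have hE0 := one_add_mul_pderiv_subst_eSer y a (constantCoeff_X (0 : Fin 2)) 0
  have hE1 := one_add_mul_pderiv_subst_eSer y a (constantCoeff_X (0 : Fin 2)) 1
  have hEg0 := one_add_mul_pderiv_subst_eSer y a hg0 0
  have hEg1 := one_add_mul_pderiv_subst_eSer y a hg0 1
  rw [pderiv_X_self] at hE0
  rw [pderiv_X_of_ne zero_ne_one] at hE1
  set E := (eSer y a).subst (X 0 : MvPowerSeries (Fin 2) B)
  set Eg := (eSer y a).subst g
  rw [Derivation.leibniz, smul_eq_mul, smul_eq_mul]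
  match i with
  | 0 =>
    rw [Matrix.cons_val_zero]
    linear_combination (E * pderiv B 0 Eg + Eg * pderiv B 0 E) * hQ
      + (1 + C a * X 0) * E * hEg0 + C y * E * Eg * mul_pderiv_zero_of_mul_eq_X_sub_X hg
      + (1 + C a * g) * Eg * hE0
  | 1 =>
    rw [Matrix.cons_val_one, Matrix.cons_val_zero]
    linear_combination (E * pderiv B 1 Eg + Eg * pderiv B 1 E) * hQ
      + (1 + C a * X 0) * E * hEg1 + C y * E * Eg * mul_pderiv_one_of_mul_eq_X_sub_X hg
      + (1 + C a * g) * Eg * hE1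

theorem mul_pderiv_subst_X_one_eSer (y a : B) (i : Fin 2) :
    (1 + C a * X 1) * pderiv B i ((eSer y a).subst (X 1))
      = ![0, C y] i * (eSer y a).subst (X 1 : MvPowerSeries (Fin 2) B) := by
  have h := one_add_mul_pderiv_subst_eSer y a (constantCoeff_X (1 : Fin 2)) i
  match i with
  | 0 =>
    rw [pderiv_X_of_ne one_ne_zero, Matrix.cons_val_zero] at *
    linear_combination h
  | 1 =>
    rw [pderiv_X_self, Matrix.cons_val_one, Matrix.cons_val_zero] at *
    linear_combination h

theorem subst_X_mul_subst_eSer {g : MvPowerSeries (Fin 2) B} (y a : B)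
    (hg : (1 + C a * X 0) * g = X 1 - X 0) :
    (eSer y a).subst (X 0) * (eSer y a).subst g = (eSer y a).subst (X 1) := by
  have := IsAddTorsionFree.of_module_rat B
  have hg0 := constantCoeff_eq_zero_of_mul_eq_X_sub_X hg
  refine eq_of_mul_pderiv_eq_mul ![0, C y] ?_ (mul_pderiv_subst_X_mul_subst_eSer y a hg)
    (mul_pderiv_subst_X_one_eSer y a) ?_ ?_
  · simp [isUnit_iff_constantCoeff]
  · simp [constantCoeff_subst_of_constantCoeff_eq_zero, constantCoeff_eSer]
  · simp [constantCoeff_subst_of_constantCoeff_eq_zero, constantCoeff_eSer, hg0]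

end

/-- the formal cocycle identity `e(X₁) · (e ∘ g) = e(X₂)` in `B[[X₁,X₂]]`, where
`g = (1+a·X₁)⁻¹·(X₂ − X₁)`. -/
theorem statement3 {B : Type*} [CommRing B] [Algebra ℚ B] (y a : B) :
    substPS (eSer y a) (MvPowerSeries.X 0) *
        substPS (eSer y a)
          ((MvPowerSeries.invOfUnit (1 + (MvPowerSeries.C (σ := Fin 2) (R := B)) a * MvPowerSeries.X 0) 1) *
            (MvPowerSeries.X 1 - MvPowerSeries.X 0)) =
      substPS (eSer y a) (MvPowerSeries.X 1) := by
  open MvPowerSeries in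
  have hg : (1 + C a * X 0) * (invOfUnit (1 + C a * X 0) 1 * (X 1 - X 0))
      = (X 1 - X 0 : MvPowerSeries (Fin 2) B) := by
    rw [← mul_assoc, mul_invOfUnit _ _ (by simp), one_mul]
  rw [substPS_eq_subst (constantCoeff_X 0), substPS_eq_subst (constantCoeff_X 1),
    substPS_eq_subst (constantCoeff_eq_zero_of_mul_eq_X_sub_X hg)]
  exact subst_X_mul_subst_eSer y a hg
end

section
/- Let p be a prime, R a commutative ring, M an R-module, a ∈ R, and φ an R-linear endomorphism of M. Assume that for every k ≥ 0 there exists N such that ∏_{i=0}^{n-1}(φ − i·a) maps M into p^k·M for all n ≥ N. Then for every integer c ≥ 0 the shifted products satisfy the same condition: for every k ≥ 0 there exists N such that ∏_{h=0}^{n-1}(φ − (c+h)·a) maps M into p^k·M for all n ≥ N. -/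
/-- `Phi φ a c r = (φ - c·a) ∘ (φ - (c+1)·a) ∘ ⋯ ∘ (φ - (c+r-1)·a)`, a composite of pairwise
commuting endomorphisms (`Phi φ a c 0 = id`). -/
def Phi {R M : Type*} [CommRing R] [AddCommGroup M] [Module R M]
    (φ : Module.End R M) (a : R) (c r : ℕ) : Module.End R M :=
  ((List.range r).map (fun h => φ - (((c + h : ℕ) : R) * a) • 1)).prod

section
variable {R M : Type*} [CommRing R] [AddCommGroup M] [Module R M]
  (φ : Module.End R M) (a : R)

lemma central (s : R) (x : Module.End R M) : Commute (s • (1 : Module.End R M)) x := by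
  unfold Commute SemiconjBy
  rw [smul_mul_assoc, one_mul, mul_smul_comm, mul_one]

lemma factor_comm (s t : R) :
    Commute (φ - s • 1) (φ - t • 1) := by
  exact ((Commute.refl φ).sub_right (central t φ).symm).sub_left
    ((central s φ).sub_right (central s (t • 1)))

lemma phi_succ_right (c n : ℕ) :
    Phi φ a c (n + 1) = Phi φ a c n * (φ - (((c + n : ℕ) : R) * a) • 1) := by
  unfold Phi
  rw [List.range_succ, List.map_append, List.prod_append, List.map_singleton,
    List.prod_singleton]

lemma phi_succ_left (c n : ℕ) :
    Phi φ a c (n + 1) = (φ - (((c : ℕ) : R) * a) • 1) * Phi φ a (c + 1) n := by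
  unfold Phi
  rw [List.range_succ_eq_map, List.map_cons, List.prod_cons, List.map_map]
  have h1 : ((fun h => φ - (((c + h : ℕ) : R) * a) • 1) ∘ Nat.succ)
      = fun h => φ - (((c + 1 + h : ℕ) : R) * a) • (1 : Module.End R M) := by
    funext i
    simp only [Function.comp_apply]
    rw [show c + Nat.succ i = c + 1 + i from by omega]
  rw [h1]
  norm_num

lemma factor_phi_comm (s : R) (c n : ℕ) :
    Commute (φ - s • 1) (Phi φ a c n) := by
  apply Commute.list_prod_right
  intro y hy
  obtain ⟨h, -, rfl⟩ := List.mem_map.mp hy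
  exact factor_comm φ s _

lemma phi_rec (c n : ℕ) :
    Phi φ a c (n + 1) = Phi φ a (c + 1) (n + 1)
      + (((n + 1 : ℕ) : R) * a) • Phi φ a (c + 1) n := by
  rw [phi_succ_left, phi_succ_right, ← (factor_phi_comm φ a _ (c + 1) n).eq]
  have hc : ((c : ℕ) : R) * a = ((c + 1 + n : ℕ) : R) * a - ((n + 1 : ℕ) : R) * a := by
    push_cast; ring
  rw [hc, sub_smul]
  rw [show φ - ((((c + 1 + n : ℕ) : R) * a) • (1 : Module.End R M)
      - (((n + 1 : ℕ) : R) * a) • 1)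
    = (φ - (((c + 1 + n : ℕ) : R) * a) • 1) + (((n + 1 : ℕ) : R) * a) • 1 by abel]
  rw [add_mul, smul_mul_assoc, one_mul]
end

section
variable {R M : Type*} [CommRing R] [AddCommGroup M] [Module R M]
  (φ : Module.End R M) (a : R)

lemma key (p k N c : ℕ)
    (hN : ∀ n ≥ N, ∀ x : M, ∃ y : M, Phi φ a c n x = (p ^ k : ℕ) • y) :
    ∀ t : ℕ, ∀ n : ℕ, N + t ≤ n → ∀ x : M, ∃ y : M,
      Phi φ a (c + 1) n x = (p ^ k : ℕ) • y
        + ((-a) ^ t * ((n.descFactorial t : ℕ) : R)) • Phi φ a (c + 1) (n - t) x := by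
  intro t
  induction t with
  | zero =>
    intro n _ x
    exact ⟨0, by simp⟩
  | succ t ih =>
    intro n hn x
    obtain ⟨y, hy⟩ := ih n (by omega) x
    have hm : n - t = (n - (t + 1)) + 1 := by omega
    set m := n - (t + 1) with hmdef
    obtain ⟨y', hy'⟩ := hN (m + 1) (by omega) x
    have hrec := phi_rec φ a c m
    have happ : Phi φ a c (m + 1) x = Phi φ a (c + 1) (m + 1) x
        + ((((m : ℕ) + 1 : ℕ) : R) * a) • Phi φ a (c + 1) m x := by
      conv_lhs => rw [hrec]
      simp [LinearMap.add_apply, LinearMap.smul_apply]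
    have h2 : Phi φ a (c + 1) (m + 1) x
        = (p ^ k : ℕ) • y' - ((((m : ℕ) + 1 : ℕ) : R) * a) • Phi φ a (c + 1) m x := by
      rw [← hy', happ]; abel
    have hcoef : ((-a) ^ t * ((n.descFactorial t : ℕ) : R)) * ((((m : ℕ) + 1 : ℕ) : R) * a)
        = -((-a) ^ (t + 1) * ((n.descFactorial (t + 1) : ℕ) : R)) := by
      rw [Nat.descFactorial_succ, Nat.cast_mul,
        show ((m : ℕ) + 1 : ℕ) = n - t from by omega]
      ring
    rw [hy, hm, h2, smul_sub, smul_smul, hcoef, neg_smul, sub_neg_eq_add]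
    refine ⟨y + ((-a) ^ t * ((n.descFactorial t : ℕ) : R)) • y', ?_⟩
    rw [smul_add, smul_comm ((-a) ^ t * ((n.descFactorial t : ℕ) : R)) ((p ^ k : ℕ)) y']
    abel

theorem statement5' (p : ℕ) (hp : p.Prime) (h : ∀ k : ℕ, ∃ N : ℕ, ∀ n ≥ N, ∀ x : M,
      ∃ y : M, Phi φ a 0 n x = (p ^ k : ℕ) • y) :
    ∀ c : ℕ, ∀ k : ℕ, ∃ N : ℕ, ∀ n ≥ N, ∀ x : M, ∃ y : M,
      Phi φ a c n x = (p ^ k : ℕ) • y := by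
  intro c
  induction c with
  | zero => exact h
  | succ c ih =>
    intro k
    obtain ⟨N, hN⟩ := ih k
    refine ⟨N + p ^ k, ?_⟩
    intro n hn x
    obtain ⟨y, hy⟩ := key φ a p k N c hN (p ^ k) n hn x
    have hdvd : (p ^ k : ℕ) ∣ n.descFactorial (p ^ k) :=
      dvd_trans (Nat.dvd_factorial (pow_pos hp.pos k) le_rfl)
        (Nat.factorial_dvd_descFactorial n (p ^ k))
    obtain ⟨w, hw⟩ := hdvd
    refine ⟨y + w • ((-a) ^ (p ^ k) • Phi φ a (c + 1) (n - p ^ k) x), ?_⟩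
    rw [hy, hw, smul_add]
    congr 1
    rw [Nat.cast_mul, show ((-a) ^ p ^ k * (((p ^ k : ℕ) : R) * ((w : ℕ) : R)))
        = ((p ^ k : ℕ) : R) * (((w : ℕ) : R) * (-a) ^ p ^ k) from by ring,
      mul_smul, mul_smul, Nat.cast_smul_eq_nsmul, Nat.cast_smul_eq_nsmul]
end

/-- if the products `∏_{i=0}^{n-1}(φ − i·a)` eventually map `M` into `p^k·M` for
every `k`, then so do the shifted products `∏_{h=0}^{n-1}(φ − (c+h)·a)` for every `c ≥ 0`. -/
theorem statement5 (p : ℕ) (hp : p.Prime) {R M : Type*} [CommRing R] [AddCommGroup M]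
    [Module R M] (a : R) (φ : Module.End R M)
    (h : ∀ k : ℕ, ∃ N : ℕ, ∀ n ≥ N, ∀ x : M, ∃ y : M, Phi φ a 0 n x = (p ^ k : ℕ) • y) :
    ∀ c : ℕ, ∀ k : ℕ, ∃ N : ℕ, ∀ n ≥ N, ∀ x : M, ∃ y : M,
      Phi φ a c n x = (p ^ k : ℕ) • y := by
  exact statement5' φ a p hp h
end

section
/- Let notation be as in the context. For every m ∈ M one has δ^0(m) = 0 if and only if φ(m) = 0; equivalently, Φ_n(m) = 0 for all n ≥ 1 if and only if φ(m) = 0. In particular the kernel of δ^0 : C^0 → C^1 equals the kernel of φ. -/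
/-- The coefficientwise Čech–Alexander differential `δ^s` attached to the stratification
`ε = (1+aX₁)^{φ/a}`: for a family `m : ℕ^s → M` and `J = (j₁,…,j_{s+1})`,
`δ^s(m)_J = Σ_{(r,u), r+|u|=j₁} (−1)^{|u|} (j₁!/(r!·∏ uᵢ!)) Φ_{c(u,J),r}(m_{u+J'})
  + Σ_{l} (−1)^l [j_l = 0] m_{J minus l-th entry}`,
where `J' = (j₂,…,j_{s+1})` and `c(u,J) = Σᵢ (uᵢ + j_{i+1})`. -/
def delta {R M : Type*} [CommRing R] [AddCommGroup M] [Module R M]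
    (φ : Module.End R M) (a : R) {s : ℕ} (m : (Fin s → ℕ) → M) :
    (Fin (s + 1) → ℕ) → M :=
  fun J =>
    (∑ v ∈ Finset.Nat.antidiagonalTuple (s + 1) (J 0),
        ((-1 : ℤ) ^ (∑ i : Fin s, v i.succ) * (Nat.multinomial Finset.univ v : ℤ)) •
          (Phi φ a (∑ i : Fin s, (v i.succ + J i.succ)) (v 0))
            (m (fun i => v i.succ + J i.succ)))
      + ∑ l : Fin (s + 1),
          ((-1 : ℤ) ^ ((l : ℕ) + 1)) •
            (if J l = 0 then m (fun i => J (l.succAbove i)) else 0)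

/-- `(M, φ)` is `a`-small: for every `k` there is `N` such that
`Φ_n = ∏_{i=0}^{n-1}(φ - i·a)` maps `M` into `p^k·M` for all `n ≥ N`. -/
def IsSmall (p : ℕ) {R M : Type*} [CommRing R] [AddCommGroup M] [Module R M]
    (φ : Module.End R M) (a : R) : Prop :=
  ∀ k : ℕ, ∃ N : ℕ, ∀ n ≥ N, ∀ x : M, ∃ y : M, Phi φ a 0 n x = (p ^ k : ℕ) • y

/-- Membership in `C^s`: a family `m` of elements of `M` lies in `p^k·M` at all but finitely
many indices, for every `k`. -/
def InC (p : ℕ) {M : Type*} [AddCommGroup M] {ι : Type*} (m : ι → M) : Prop :=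
  ∀ k : ℕ, {I : ι | ¬ ∃ y : M, m I = (p ^ k : ℕ) • y}.Finite


private lemma phi_zero_succ {R M : Type*} [CommRing R] [AddCommGroup M] [Module R M]
    (φ : Module.End R M) (a : R) (n : ℕ) :
    Phi φ a 0 (n + 1) = Phi φ a 1 n * φ := by
  have hc : Commute φ (Phi φ a 1 n) := by
    apply Commute.list_prod_right
    intro y hy
    obtain ⟨h, -, rfl⟩ := List.mem_map.1 hy
    exact (Commute.refl φ).sub_right (Commute.smul_right (Commute.one_right φ) _)
  have : Phi φ a 0 (n + 1) = φ * Phi φ a 1 n := by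
    unfold Phi
    rw [List.range_succ_eq_map, List.map_cons, List.prod_cons, List.map_map]
    congr 1
    · simp
    · congr 1
      apply List.map_congr_left
      intro h _
      simp only [Function.comp_apply]
      norm_num [Nat.add_comm]
  rw [this, hc.eq]

private lemma delta_zero_eval {R M : Type*} [CommRing R] [AddCommGroup M] [Module R M]
    (φ : Module.End R M) (a : R) (x : M) (J : Fin 1 → ℕ) :
    delta φ a (fun _ : Fin 0 → ℕ => x) J
      = Phi φ a 0 (J 0) x - (if J 0 = 0 then x else 0) := by
  simp [delta, Finset.Nat.antidiagonalTuple_one, sub_eq_add_neg]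
  split <;> simp

/-- `δ^0(x) = 0 ↔ φ(x) = 0`; equivalently `Φ_n(x) = 0` for all `n ≥ 1` iff
`φ(x) = 0`. In particular the kernel of `δ^0 : C^0 → C^1` equals the kernel of `φ`. -/
theorem statement7 {R M : Type*} [CommRing R] [AddCommGroup M] [Module R M]
    (φ : Module.End R M) (a : R) (x : M) :
    ((delta φ a (fun _ : Fin 0 → ℕ => x) = 0) ↔ φ x = 0) ∧
      ((∀ n : ℕ, 1 ≤ n → Phi φ a 0 n x = 0) ↔ φ x = 0) := by
  have key : (∀ n : ℕ, 1 ≤ n → Phi φ a 0 n x = 0) ↔ φ x = 0 := by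
    constructor
    · intro h
      have := h 1 le_rfl
      rw [Phi, List.range_succ, List.range_zero] at this
      simpa using this
    · intro h n hn
      obtain ⟨k, rfl⟩ := Nat.exists_eq_add_of_le hn
      rw [Nat.add_comm, phi_zero_succ]
      simp [Module.End.mul_apply, h]
  refine ⟨?_, key⟩
  rw [← key]
  constructor
  · intro h n hn
    have := congrFun h (fun _ => n)
    rw [delta_zero_eval] at this
    simpa [Nat.one_le_iff_ne_zero.mp hn] using this
  · intro h
    funext J
    rw [delta_zero_eval]
    rcases Nat.eq_zero_or_pos (J 0) with h0 | h0
    · simp [h0, Phi]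
    · simp [Nat.pos_iff_ne_zero.mp h0, h _ h0]
end

section
/- Let notation be as in the context, with p a prime, (M,φ) a-small and M p-adically complete. Define ρ : M → (families ℕ → M) by ρ(x)_0 := 0 and ρ(x)_n := Φ_{1,n−1}(x) = ∏_{i=1}^{n-1}(φ − i·a)(x) for n ≥ 1 (so ρ(x)_1 = x). Then: (i) ρ(x) ∈ C^1 for every x ∈ M, and ρ : M → C^1 is an injective R-linear map; (ii) the kernel of δ^1 : C^1 → C^2 equals the image ρ(M); (iii) ρ(φ(x)) = δ^0(x) for all x ∈ M. Consequently ρ induces an isomorphism of R-modules M/φ(M) ≅ ker(δ^1)/im(δ^0), i.e. the first cohomology of the complex (C^•, δ^•) is M/φ(M). -/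
/-!
Modulo `p ^ k`, the recursion `Φ_{c+1,n+1} = Φ_{c,n+1} - (n+1)a Φ_{c+1,n}` gives
`Φ_{c+1,N+j} ≡ (-a)^j (N+1)⋯(N+j) Φ_{c+1,N}` once `Φ_{c,n} ∈ p^k M` for `n ≥ N`, and `j!`
divides `(N+1)⋯(N+j)`; so smallness passes from `Φ_0` to `Φ_1`, which puts `ρ(x)` in `C¹`.

Since `Φ_{n,r} ∘ Φ_{1,n-1} = Φ_{1,n+r-1}`, every term of `δ¹(ρ x)_{(i,j)}` is
`(-1)^u C(i,u) ρ(x)_{i+j}` up to boundary corrections, and the alternating binomial sum is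
`[i = 0]`.
Conversely, the `(0,0)`- and `(1,n)`-coefficients of `δ¹ m = 0` say `m_0 = 0` and
`m_{n+1} = (φ - na) m_n` (plus `m_1` when `n = 0`), the recursion defining `ρ(m_1)`.
Finally `ρ(φ x) = δ⁰(x)` and `ρ(x)_1 = x` identify `ρ⁻¹(im δ⁰)` with `φ(M)`.
-/

section Differential

variable {R M : Type*} [CommRing R] [AddCommGroup M] [Module R M] (φ : Module.End R M) (a : R)

theorem Phi_zero (c : ℕ) : Phi φ a c 0 = 1 := rfl

theorem Phi_succ (c r : ℕ) :
    Phi φ a c (r + 1) = Phi φ a c r * (φ - (((c + r : ℕ) : R) * a) • 1) := by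
  rw [Phi, List.range_succ, List.map_append, List.prod_append, List.map_singleton,
    List.prod_singleton]
  rfl

theorem Phi_zero_one : Phi φ a 0 1 = φ := by
  simp [Phi_succ, Phi_zero]

theorem commute_sub_smul_one_Phi (b : R) (c r : ℕ) : Commute (φ - b • 1) (Phi φ a c r) := by
  have hφ (b' : R) : Commute φ (b' • 1) := (Commute.one_right φ).smul_right b'
  have hscalar (b' : R) : Commute (b • 1 : Module.End R M) (b' • 1) :=
    ((Commute.one_right _).smul_right b').smul_left b
  refine Commute.list_prod_right _ _ fun f hf => ?_
  obtain ⟨h, -, rfl⟩ := List.mem_map.mp hf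
  exact ((Commute.refl φ).sub_right (hφ _)).sub_left ((hφ b).symm.sub_right (hscalar _))

theorem commute_Phi (c r c' r' : ℕ) : Commute (Phi φ a c r) (Phi φ a c' r') := by
  refine Commute.list_prod_left _ _ fun f hf => ?_
  obtain ⟨h, -, rfl⟩ := List.mem_map.mp hf
  exact commute_sub_smul_one_Phi φ a _ _ _

theorem Phi_add (c r r' : ℕ) : Phi φ a c (r + r') = Phi φ a c r * Phi φ a (c + r) r' := by
  induction r' with
  | zero => rfl
  | succ n ih => rw [← add_assoc, Phi_succ, ih, Phi_succ, mul_assoc, add_assoc]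

theorem Phi_apply_Phi (c r r' : ℕ) (x : M) :
    Phi φ a (c + r) r' (Phi φ a c r x) = Phi φ a c (r + r') x := by
  rw [Phi_add, (commute_Phi φ a c r (c + r) r').eq, Module.End.mul_apply]

theorem Phi_one_apply (n : ℕ) (x : M) : Phi φ a 1 n (φ x) = Phi φ a 0 (n + 1) x := by
  simpa [Phi_zero_one, add_comm] using Phi_apply_Phi φ a 0 1 n x

theorem Phi_succ_succ (c n : ℕ) :
    Phi φ a (c + 1) (n + 1) =
      Phi φ a c (n + 1) - (((n + 1 : ℕ) : R) * a) • Phi φ a (c + 1) n := by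
  rw [Phi_succ, ← (commute_sub_smul_one_Phi φ a _ _ _).eq, add_comm n 1, Phi_add,
    Phi_succ φ a c 0, Phi_zero, one_mul]
  have hcoeff :
      ((c + 1 + n : ℕ) : R) * a = ((c + 0 : ℕ) : R) * a + ((1 + n : ℕ) : R) * a := by
    push_cast; ring
  rw [hcoeff, add_smul, sub_add_eq_sub_sub, sub_mul, sub_mul, smul_mul_assoc, smul_mul_assoc,
    one_mul]

theorem delta_zero_apply (x : M) (J : Fin 1 → ℕ) :
    delta φ a (fun _ : Fin 0 → ℕ => x) J = Phi φ a 0 (J 0) x - if J 0 = 0 then x else 0 := by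
  have huniv : (Finset.univ : Finset (Fin 1)) = {0} := rfl
  rw [delta, Finset.Nat.antidiagonalTuple_one, Finset.sum_singleton, Fin.sum_univ_one]
  simp only [huniv, Fin.sum_univ_zero, pow_zero, Nat.multinomial_singleton, Nat.cast_one, mul_one,
    one_smul, Fin.val_zero, zero_add, pow_one, neg_smul, Matrix.cons_val_zero]
  abel

theorem delta_one_apply (m : (Fin 1 → ℕ) → M) (J : Fin 2 → ℕ) :
    delta φ a m J =
      (∑ u ∈ Finset.range (J 0 + 1), ((-1 : ℤ) ^ u * ((J 0).choose u : ℤ)) •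
          Phi φ a (u + J 1) (J 0 - u) (m fun _ => u + J 1))
        - (if J 0 = 0 then m (fun _ => J 1) else 0)
        + (if J 1 = 0 then m (fun _ => J 0) else 0) := by
  have hsucc (i : Fin 1) : (i.succ : Fin 2) = 1 := by fin_cases i; rfl
  have hsucc0 : (fun i : Fin 1 => J ((0 : Fin 2).succAbove i)) = fun _ => J 1 := by
    funext i; fin_cases i; rfl
  have hsucc1 : (fun i : Fin 1 => J ((1 : Fin 2).succAbove i)) = fun _ => J 0 := by
    funext i; fin_cases i; rfl
  have huniv : (Finset.univ : Finset (Fin 2)) = insert 0 {1} := rfl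
  rw [delta, Finset.Nat.antidiagonalTuple_two, Finset.sum_map,
    ← Finset.HasAntidiagonal.map_swap_antidiagonal, Finset.sum_map,
    Finset.Nat.sum_antidiagonal_eq_sum_range_succ_mk, Fin.sum_univ_two, hsucc0, hsucc1]
  simp only [Function.Embedding.coeFn_mk, piFinTwoEquiv_symm_apply,
    Prod.swap_prod_mk, Fin.sum_univ_one, hsucc, Fin.cons_zero, Fin.cons_one, huniv,
    Nat.multinomial_insert (by decide : (0 : Fin 2) ∉ ({1} : Finset (Fin 2))),
    Nat.multinomial_singleton, mul_one, Finset.sum_singleton, Fin.val_zero, Fin.val_one,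
    zero_add, pow_one, neg_smul, one_smul]
  rw [Finset.sum_congr rfl fun u hu => by
    rw [Nat.sub_add_cancel (Nat.lt_succ_iff.mp (Finset.mem_range.mp hu)),
      Nat.choose_symm (Nat.lt_succ_iff.mp (Finset.mem_range.mp hu))]]
  abel

def rhoSeq (x : M) (n : ℕ) : M := if n = 0 then 0 else Phi φ a 1 (n - 1) x

def rho (x : M) (J : Fin 1 → ℕ) : M := rhoSeq φ a x (J 0)

@[simp] theorem rhoSeq_zero (x : M) : rhoSeq φ a x 0 = 0 := rfl

@[simp] theorem rhoSeq_one (x : M) : rhoSeq φ a x 1 = x := rfl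

theorem Phi_apply_rhoSeq (x : M) (n r : ℕ) :
    Phi φ a n r (rhoSeq φ a x n) =
      rhoSeq φ a x (n + r) - if n = 0 then rhoSeq φ a x r else 0 := by
  cases n with
  | zero => simp
  | succ n => simpa [rhoSeq, add_comm 1 n, add_right_comm n 1 r] using Phi_apply_Phi φ a 1 n r x

theorem rhoSeq_phi (x : M) (n : ℕ) :
    rhoSeq φ a (φ x) n = Phi φ a 0 n x - if n = 0 then x else 0 := by
  cases n with
  | zero => simp [Phi_zero]
  | succ n => simp [rhoSeq, Phi_one_apply]

theorem rho_phi (x : M) : rho φ a (φ x) = delta φ a (fun _ : Fin 0 → ℕ => x) := by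
  funext J
  rw [rho, rhoSeq_phi, delta_zero_apply]

theorem rho_injective : Function.Injective (rho φ a : M → (Fin 1 → ℕ) → M) :=
  fun x y h => by simpa [rho] using congrFun h fun _ => 1

theorem rho_add (x y : M) : rho φ a (x + y) = rho φ a x + rho φ a y := by
  funext J
  simp only [rho, rhoSeq, Pi.add_apply, map_add]
  split_ifs <;> simp

theorem rho_smul (r : R) (x : M) : rho φ a (r • x) = r • rho φ a x := by
  funext J
  simp only [rho, rhoSeq, Pi.smul_apply, map_smul]
  split_ifs <;> simp

theorem exists_rho_eq_delta_iff (x : M) :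
    (∃ y, rho φ a x = delta φ a (fun _ : Fin 0 → ℕ => y)) ↔ ∃ z, x = φ z := by
  constructor
  · rintro ⟨y, h⟩
    exact ⟨y, rho_injective φ a (h.trans (rho_phi φ a y).symm)⟩
  · rintro ⟨z, rfl⟩
    exact ⟨z, rho_phi φ a z⟩

theorem delta_rho (x : M) : delta φ a (rho φ a x) = 0 := by
  funext J
  have hterm : ∀ u ∈ Finset.range (J 0 + 1),
      ((-1 : ℤ) ^ u * ((J 0).choose u : ℤ)) •
          Phi φ a (u + J 1) (J 0 - u) (rho φ a x fun _ => u + J 1)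
        = ((-1 : ℤ) ^ u * ((J 0).choose u : ℤ)) • rhoSeq φ a x (J 0 + J 1)
          - if u = 0 then (if J 1 = 0 then rhoSeq φ a x (J 0) else 0) else 0 := by
    intro u hu
    have hu : u + J 1 + (J 0 - u) = J 0 + J 1 := by
      have := Finset.mem_range.mp hu; omega
    rw [rho, Phi_apply_rhoSeq, hu, smul_sub]
    rcases Nat.eq_zero_or_pos u with rfl | hu0
    · split_ifs <;> simp_all
    · rw [if_neg (by omega), if_neg hu0.ne', smul_zero]
  rw [delta_one_apply, Finset.sum_congr rfl hterm, Finset.sum_sub_distrib, ← Finset.sum_smul,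
    Int.alternating_sum_range_choose, Finset.sum_ite_eq' _ 0,
    if_pos (Finset.mem_range.2 (Nat.succ_pos _))]
  by_cases h0 : J 0 = 0 <;> by_cases h1 : J 1 = 0 <;> simp [rho, h0, h1]

theorem eq_rho_of_delta_eq_zero {m : (Fin 1 → ℕ) → M} (hm : delta φ a m = 0) :
    m = rho φ a (m fun _ => 1) := by
  have hm0 : m (fun _ => 0) = 0 := by
    simpa [delta_one_apply, Phi_zero] using congrFun hm ![0, 0]
  have hrec (n : ℕ) : m (fun _ => n + 1) =
      Phi φ a n 1 (m fun _ => n) + if n = 0 then m (fun _ => 1) else 0 := by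
    have h := congrFun hm ![1, n]
    simp only [delta_one_apply, Matrix.cons_val_zero, Matrix.cons_val_one, Finset.sum_range_succ,
      Finset.sum_range_zero, Nat.choose_self, Nat.choose_zero_right, Nat.sub_self, Nat.sub_zero,
      Phi_zero, Module.End.one_apply, one_ne_zero, if_false, Pi.zero_apply, zero_add,
      add_comm 1 n, pow_zero, pow_one, Nat.cast_one, mul_one, one_smul, neg_smul, sub_zero] at h
    refine eq_of_sub_eq_zero ((?_ : _ = _).trans (neg_eq_zero.mpr h))
    abel
  have hseq (n : ℕ) : m (fun _ => n) = rhoSeq φ a (m fun _ => 1) n := by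
    induction n with
    | zero => exact hm0
    | succ n ih => rw [hrec, ih, Phi_apply_rhoSeq, rhoSeq_one, sub_add_cancel]
  funext J
  rw [rho, ← hseq]
  exact congrArg m (funext fun i => congrArg J (Subsingleton.elim i 0))

end Differential

section Smallness

variable {R M : Type*} [CommRing R] [AddCommGroup M] [Module R M]

def IsSmallAt (p : ℕ) (φ : Module.End R M) (a : R) (c : ℕ) : Prop :=
  ∀ k : ℕ, ∃ N : ℕ, ∀ n ≥ N, ∀ x : M, ∃ y : M, Phi φ a c n x = (p ^ k : ℕ) • y

variable {p : ℕ} {φ : Module.End R M} {a : R}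

theorem IsSmallAt.succ (hp : 0 < p) {c : ℕ} (h : IsSmallAt p φ a c) :
    IsSmallAt p φ a (c + 1) := by
  intro k
  obtain ⟨N, hN⟩ := h k
  set S := LinearMap.range ((p ^ k : ℕ) • LinearMap.id : M →ₗ[R] M)
  have mem_S (y : M) : y ∈ S ↔ ∃ z, y = (p ^ k : ℕ) • z := by
    simp only [S, LinearMap.mem_range, LinearMap.smul_apply, LinearMap.id_apply]
    exact exists_congr fun _ => eq_comm
  have hmod (j : ℕ) (x : M) : Phi φ a (c + 1) (N + j) x
      - ((-a) ^ j * ((N + 1).ascFactorial j : R)) • Phi φ a (c + 1) N x ∈ S := by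
    induction j with
    | zero => simp
    | succ j ih =>
      convert S.sub_mem ((mem_S _).2 (hN (N + j + 1) (by omega) x))
        (S.smul_mem (((N + j + 1 : ℕ) : R) * a) ih) using 1
      rw [← add_assoc, Phi_succ_succ, Nat.ascFactorial_succ]
      simp only [LinearMap.sub_apply, LinearMap.smul_apply]
      push_cast
      module
  refine ⟨N + p ^ k, fun n hn x => ?_⟩
  obtain ⟨j, rfl⟩ := Nat.exists_eq_add_of_le (le_trans (Nat.le_add_right N _) hn)
  obtain ⟨q, hq⟩ : p ^ k ∣ (N + 1).ascFactorial j :=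
    (Nat.dvd_factorial (pow_pos hp k) (by omega)).trans (Nat.factorial_dvd_ascFactorial _ _)
  have hcoeff : ((-a) ^ j * ((N + 1).ascFactorial j : R)) • Phi φ a (c + 1) N x ∈ S :=
    (mem_S _).2 ⟨(-a) ^ j • q • Phi φ a (c + 1) N x, by rw [hq]; push_cast; module⟩
  simpa [mem_S] using S.add_mem (hmod j x) hcoeff

theorem inC_rho (hp : 0 < p) (hsmall : IsSmall p φ a) (x : M) : InC p (rho φ a x) := by
  intro k
  obtain ⟨N, hN⟩ := IsSmallAt.succ hp hsmall k
  have hfin : {n : ℕ | ¬ ∃ y, rhoSeq φ a x n = (p ^ k : ℕ) • y}.Finite := by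
    refine (Set.finite_Iic N).subset fun n hn => Set.mem_Iic.2 (not_lt.mp fun hlt => hn ?_)
    obtain ⟨y, hy⟩ := hN (n - 1) (by omega) x
    exact ⟨y, by rwa [rhoSeq, if_neg (by omega)]⟩
  exact hfin.preimage (Equiv.funUnique (Fin 1) ℕ).injective.injOn

theorem inC_and_delta_eq_zero_iff (hp : 0 < p) (hsmall : IsSmall p φ a)
    (m : (Fin 1 → ℕ) → M) : InC p m ∧ delta φ a m = 0 ↔ ∃ x, m = rho φ a x := by
  constructor
  · exact fun h => ⟨_, eq_rho_of_delta_eq_zero φ a h.2⟩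
  · rintro ⟨x, rfl⟩
    exact ⟨inC_rho hp hsmall x, delta_rho φ a x⟩

end Smallness

theorem statement8_general (p : ℕ) (hp : p.Prime) {R M : Type*} [CommRing R] [AddCommGroup M]
    [Module R M] (φ : Module.End R M) (a : R) (hsmall : IsSmall p φ a) :
    let ρ : M → (Fin 1 → ℕ) → M := fun x J => if J 0 = 0 then 0 else Phi φ a 1 (J 0 - 1) x
    -- (i) ρ lands in C¹ and is injective and R-linear
    (∀ x : M, InC p (ρ x)) ∧
      (∀ x y : M, ρ x = ρ y → x = y) ∧
      (∀ x y : M, ρ (x + y) = ρ x + ρ y) ∧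
      (∀ (r : R) (x : M), ρ (r • x) = r • ρ x) ∧
      -- (ii) the kernel of δ¹ : C¹ → C² equals the image of ρ
      (∀ m : (Fin 1 → ℕ) → M, (InC p m ∧ delta φ a m = 0) ↔ ∃ x : M, m = ρ x) ∧
      -- (iii) ρ(φ(x)) = δ⁰(x)
      (∀ x : M, ρ (φ x) = delta φ a (fun _ : Fin 0 → ℕ => x)) ∧
      -- consequently, ρ induces an isomorphism M/φ(M) ≅ ker(δ¹)/im(δ⁰)
      (∀ x : M, (∃ y : M, ρ x = delta φ a (fun _ : Fin 0 → ℕ => y)) ↔ ∃ z : M, x = φ z) :=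
  ⟨inC_rho hp.pos hsmall, fun _ _ h => rho_injective φ a h, rho_add φ a, rho_smul φ a,
    inC_and_delta_eq_zero_iff hp.pos hsmall, rho_phi φ a, exists_rho_eq_delta_iff φ a⟩

/-- with `(M,φ)` `a`-small and `M` `p`-adically complete, the map
`ρ(x)_n = ∏_{i=1}^{n-1}(φ − i·a)(x)` (with `ρ(x)_0 = 0`) is an injective `R`-linear map
`M → C^1` whose image is the kernel of `δ^1`, it satisfies `ρ(φ(x)) = δ^0(x)`, and it induces
an isomorphism `M/φ(M) ≅ ker(δ^1)/im(δ^0)`: an element `ρ(x)` lies in the image of `δ^0` iff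
`x` lies in the image of `φ`. -/
theorem statement8 (p : ℕ) (hp : p.Prime) {R M : Type*} [CommRing R] [AddCommGroup M]
    [Module R M] (φ : Module.End R M) (a : R) (hsmall : IsSmall p φ a)
    [IsAdicComplete (Ideal.span {(p : ℤ)}) M] :
    let ρ : M → (Fin 1 → ℕ) → M := fun x J => if J 0 = 0 then 0 else Phi φ a 1 (J 0 - 1) x
    -- (i) ρ lands in C¹ and is injective and R-linear
    (∀ x : M, InC p (ρ x)) ∧
      (∀ x y : M, ρ x = ρ y → x = y) ∧
      (∀ x y : M, ρ (x + y) = ρ x + ρ y) ∧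
      (∀ (r : R) (x : M), ρ (r • x) = r • ρ x) ∧
      -- (ii) the kernel of δ¹ : C¹ → C² equals the image of ρ
      (∀ m : (Fin 1 → ℕ) → M, (InC p m ∧ delta φ a m = 0) ↔ ∃ x : M, m = ρ x) ∧
      -- (iii) ρ(φ(x)) = δ⁰(x)
      (∀ x : M, ρ (φ x) = delta φ a (fun _ : Fin 0 → ℕ => x)) ∧
      -- consequently, ρ induces an isomorphism M/φ(M) ≅ ker(δ¹)/im(δ⁰)
      (∀ x : M, (∃ y : M, ρ x = delta φ a (fun _ : Fin 0 → ℕ => y)) ↔ ∃ z : M, x = φ z) :=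
  statement8_general p hp φ a hsmall
end

section
/- Let notation be as in the context and let s ≥ 1. For every K = (k_1,…,k_s) ∈ ℕ^s with k_1 = 0 there exist integers z_{K,I} ∈ {−1,0,1} for I ∈ Λ₁^s and an integer ε_K ∈ {−1,0,1}, depending only on s and K, with z_{K,I} = 0 whenever |I| ≠ |K| (so only finitely many z_{K,I} are nonzero), such that: for all families m : ℕ^s → M and n : ℕ^{s+1} → M with δ^s(m) = n, one has m_K = Σ_{I∈Λ₁^s} z_{K,I}·m_I + ε_K·n_{(0,K)}, where (0,K) := (0,k_1,…,k_s) ∈ ℕ^{s+1}. Moreover: (i) if K ∈ Λ₁^s one may take ε_K = 0, z_{K,K} = 1 and z_{K,I} = 0 for I ≠ K; (ii) if K ∉ Λ₁^s (so the smallest index t with k_t ≠ 0 exists and is even, say t = 2i) one may take ε_K = 1, and additionally z_{K,I} = 0 for all I in case k_{2i}, k_{2i+1}, …, k_s are all nonzero. -/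
/-- `Λ₁^s` (in 0-indexed form, for tuples of length `s+1`): `I 0 = 0` and the smallest index `j`
with `I j ≠ 0` (if any) is even, i.e. odd in the paper's 1-indexed convention (hence `≥ 3`
1-indexed). The all-zero tuple belongs to `Λ₁`. -/
def Lambda1 {s : ℕ} (I : Fin (s + 1) → ℕ) : Prop :=
  I 0 = 0 ∧ ∀ j : Fin (s + 1), I j ≠ 0 → (∀ j' < j, I j' = 0) → Even (j : ℕ)

section Helpers

variable {s : ℕ}

def Dt (K : Fin (s+1) → ℕ) (l : Fin (s+1)) : Fin (s+1) → ℕ :=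
  Fin.cons 0 (fun i => K (l.succAbove i))

lemma Dt_zero (K : Fin (s+1) → ℕ) (hK : K 0 = 0) : Dt K 0 = K := by
  funext j
  induction j using Fin.cases with
  | zero => simp [Dt, hK]
  | succ i => simp [Dt, Fin.succAbove_zero]

lemma Dt_sum (K : Fin (s+1) → ℕ) (l : Fin (s+1)) (h : K l = 0) :
    ∑ i, Dt K l i = ∑ i, K i := by
  rw [Fin.sum_univ_succAbove K l, h, Dt, Fin.sum_cons]

def StepP (K : Fin (s+1) → ℕ) (l₁ l₂ : Fin (s+1)) : Prop :=
  ∀ i : Fin s, (l₁:ℕ) ≤ (i:ℕ) → (i:ℕ) < (l₂:ℕ) → K i.castSucc = K i.succ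

lemma Dt_eq_of_step (K : Fin (s+1) → ℕ) (l₁ l₂ : Fin (s+1))
    (hle : l₁ ≤ l₂) (hP : StepP K l₁ l₂) : Dt K l₁ = Dt K l₂ := by
  funext j
  induction j using Fin.cases with
  | zero => simp [Dt]
  | succ i =>
    simp only [Dt, Fin.cons_succ]
    rcases lt_or_ge i.castSucc l₁ with h1 | h1
    · rw [Fin.succAbove_of_castSucc_lt _ _ h1,
        Fin.succAbove_of_castSucc_lt _ _ (lt_of_lt_of_le h1 hle)]
    · rw [Fin.succAbove_of_le_castSucc _ _ h1]
      rcases lt_or_ge i.castSucc l₂ with h2 | h2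
      · rw [Fin.succAbove_of_castSucc_lt _ _ h2]
        exact (hP i (by simpa [Fin.le_def] using h1) (by simpa [Fin.lt_def] using h2)).symm
      · rw [Fin.succAbove_of_le_castSucc _ _ h2]

lemma step_of_Dt_eq (K : Fin (s+1) → ℕ) (l₁ l₂ : Fin (s+1))
    (h : Dt K l₁ = Dt K l₂) : StepP K l₁ l₂ := by
  intro i hi1 hi2
  have := congrFun h i.succ
  simp only [Dt, Fin.cons_succ] at this
  rw [Fin.succAbove_of_le_castSucc _ _ (by simpa [Fin.le_def] using hi1),
    Fin.succAbove_of_castSucc_lt _ _ (by simpa [Fin.lt_def] using hi2)] at this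
  exact this.symm

lemma const_of_step (K : Fin (s+1) → ℕ) (l₁ l₂ : Fin (s+1))
    (hP : StepP K l₁ l₂) : ∀ l : Fin (s+1), l₁ ≤ l → l ≤ l₂ → K l = K l₁ := by
  have key : ∀ n : ℕ, ∀ l : Fin (s+1), (l:ℕ) = (l₁:ℕ) + n → l ≤ l₂ → K l = K l₁ := by
    intro n
    induction n with
    | zero => intro l hl _; congr 1; exact Fin.ext (by omega)
    | succ n ih =>
      intro l hl hle
      have hlpos : (l:ℕ) ≠ 0 := by omega
      have hls : (l:ℕ) - 1 < s := by have := l.isLt; omega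
      set i : Fin s := ⟨(l:ℕ) - 1, hls⟩ with hi
      have hsucc : i.succ = l := Fin.ext (by simp [hi]; omega)
      have hcast : (i.castSucc : ℕ) = (l₁:ℕ) + n := by simp [hi]; omega
      have h1 : K i.castSucc = K i.succ := hP i (by simp [hi]; omega)
        (by simp [hi]; have := Fin.le_def.mp hle; omega)
      rw [hsucc] at h1
      rw [← h1]
      exact ih i.castSucc hcast (Fin.le_def.mpr (by rw [hcast]; have := Fin.le_def.mp hle; omega))
  intro l h1 h2
  exact key ((l:ℕ) - (l₁:ℕ)) l (by have := Fin.le_def.mp h1; omega) h2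

lemma neg_one_pow_cases (a : ℕ) : (-1:ℤ)^a = 1 ∨ (-1:ℤ)^a = -1 := by
  rcases Nat.even_or_odd a with h | h
  · exact Or.inl h.neg_one_pow
  · exact Or.inr h.neg_one_pow

lemma two_mul_alt_Icc (a b : ℕ) (h : a ≤ b) :
    2 * (∑ l ∈ Finset.Icc a b, (-1:ℤ)^l) = (-1:ℤ)^a + (-1:ℤ)^b := by
  induction b, h using Nat.le_induction with
  | base => simp; ring
  | succ b hb ih =>
    rw [show Finset.Icc a (b+1) = insert (b+1) (Finset.Icc a b) by
      ext x; simp [Finset.mem_Icc]; omega, Finset.sum_insert (by simp)]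
    rw [mul_add, ih]
    ring

lemma alt_Icc_mem (a b : ℕ) : (∑ l ∈ Finset.Icc a b, (-1:ℤ)^l) = -1 ∨
    (∑ l ∈ Finset.Icc a b, (-1:ℤ)^l) = 0 ∨ (∑ l ∈ Finset.Icc a b, (-1:ℤ)^l) = 1 := by
  rcases le_or_gt a b with h | h
  · have h2 := two_mul_alt_Icc a b h
    rcases neg_one_pow_cases a with ha | ha <;> rcases neg_one_pow_cases b with hb | hb <;>
      rw [ha, hb] at h2 <;> omega
  · rw [Finset.Icc_eq_empty (by omega)]; simp

lemma alt_Icc_zero (a b : ℕ) (ha : Odd a) (hb : Even b) (h : a ≤ b) :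
    (∑ l ∈ Finset.Icc a b, (-1:ℤ)^l) = 0 := by
  have h2 := two_mul_alt_Icc a b h
  rw [ha.neg_one_pow, hb.neg_one_pow] at h2
  omega

lemma closed_eq_Icc {n : ℕ} (F : Finset (Fin n))
    (hcl : ∀ a ∈ F, ∀ b ∈ F, ∀ c : Fin n, a ≤ c → c ≤ b → c ∈ F) (hne : F.Nonempty) :
    F.image Fin.val = Finset.Icc ((F.image Fin.val).min' (hne.image _))
      ((F.image Fin.val).max' (hne.image _)) := by
  set G := F.image Fin.val
  have hGne : G.Nonempty := hne.image _
  ext x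
  simp only [Finset.mem_Icc]
  constructor
  · intro hx; exact ⟨Finset.min'_le _ _ hx, Finset.le_max' _ _ hx⟩
  · rintro ⟨h1, h2⟩
    obtain ⟨a, haF, ha⟩ := Finset.mem_image.mp (G.min'_mem hGne)
    obtain ⟨b, hbF, hb⟩ := Finset.mem_image.mp (G.max'_mem hGne)
    have hxlt : x < n := lt_of_le_of_lt (h2.trans_eq hb.symm) b.isLt
    refine Finset.mem_image.mpr ⟨⟨x, hxlt⟩, hcl a haF b hbF ⟨x, hxlt⟩ ?_ ?_, rfl⟩
    · exact Fin.le_def.mpr (by simpa [ha])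
    · exact Fin.le_def.mpr (by simpa [hb])

lemma alt_closed_mem {n : ℕ} (F : Finset (Fin n))
    (hcl : ∀ a ∈ F, ∀ b ∈ F, ∀ c : Fin n, a ≤ c → c ≤ b → c ∈ F) :
    (∑ l ∈ F, (-1:ℤ)^(l:ℕ)) = -1 ∨ (∑ l ∈ F, (-1:ℤ)^(l:ℕ)) = 0 ∨
    (∑ l ∈ F, (-1:ℤ)^(l:ℕ)) = 1 := by
  rcases F.eq_empty_or_nonempty with h | hne
  · subst h; simp
  · have himg : ∑ l ∈ F, (-1:ℤ)^(l:ℕ) = ∑ x ∈ F.image Fin.val, (-1:ℤ)^x :=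
      (Finset.sum_image (fun a _ b _ h => Fin.val_injective h)).symm
    rw [himg, closed_eq_Icc F hcl hne]
    exact alt_Icc_mem _ _

lemma Dt_lambda1 (K : Fin (s+1) → ℕ) (t : Fin (s+1)) (ht1 : K t ≠ 0)
    (ht2 : ∀ j' < t, K j' = 0) (ht3 : Odd (t:ℕ)) (l : Fin (s+1)) (hl : (t:ℕ) < (l:ℕ)) :
    Dt K l 0 = 0 ∧ ∀ j : Fin (s+1), Dt K l j ≠ 0 → (∀ j' < j, Dt K l j' = 0) → Even (j : ℕ) := by
  have hzero : ∀ j : Fin (s+1), (j:ℕ) ≤ (t:ℕ) → Dt K l j = 0 := by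
    intro j hj
    induction j using Fin.cases with
    | zero => simp [Dt]
    | succ i =>
      simp only [Dt, Fin.cons_succ]
      rw [Fin.succAbove_of_castSucc_lt _ _ (Fin.lt_def.mpr (by simp at hj ⊢; omega))]
      exact ht2 _ (Fin.lt_def.mpr (by simp at hj ⊢; omega))
  have hts : (t:ℕ) < s := by have := l.isLt; omega
  have hnz : Dt K l ⟨(t:ℕ)+1, by omega⟩ ≠ 0 := by
    have he : (⟨(t:ℕ)+1, by omega⟩ : Fin (s+1)) = (⟨(t:ℕ), hts⟩ : Fin s).succ := rfl
    rw [he]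
    simp only [Dt, Fin.cons_succ]
    rw [Fin.succAbove_of_castSucc_lt _ _ (Fin.lt_def.mpr (by simpa using hl))]
    have he2 : (⟨(t:ℕ), hts⟩ : Fin s).castSucc = t := Fin.ext (by simp)
    rw [he2]; exact ht1
  constructor
  · simp [Dt]
  · intro j hj hprev
    have h1 : (t:ℕ) < (j:ℕ) := by by_contra h; exact hj (hzero j (by omega))
    have h2 : (j:ℕ) ≤ (t:ℕ)+1 := by
      by_contra h
      exact hnz (hprev ⟨(t:ℕ)+1, by omega⟩ (Fin.lt_def.mpr (by simp; omega)))
    have he : (j:ℕ) = (t:ℕ)+1 := by omega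
    rw [he]; exact ht3.add_one

lemma Dt_eq_small (K : Fin (s+1) → ℕ) (t : Fin (s+1)) (ht2 : ∀ j' < t, K j' = 0)
    (l₁ l₂ : Fin (s+1)) (h1 : (l₁:ℕ) < (t:ℕ)) (h2 : (l₂:ℕ) < (t:ℕ)) : Dt K l₁ = Dt K l₂ := by
  have aux : ∀ l₁ l₂ : Fin (s+1), l₁ ≤ l₂ → (l₂:ℕ) < (t:ℕ) → Dt K l₁ = Dt K l₂ := by
    intro l₁ l₂ hle hlt
    apply Dt_eq_of_step K l₁ l₂ hle
    intro i hi1 hi2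
    rw [ht2 i.castSucc (Fin.lt_def.mpr (by simp; omega)),
      ht2 i.succ (Fin.lt_def.mpr (by simp; omega))]
  rcases le_total l₁ l₂ with h | h
  · exact aux _ _ h h2
  · exact (aux _ _ h h1).symm

lemma sum_Ft (tv : ℕ) (h1 : 1 ≤ tv) (hodd : Odd tv) (hts : tv ≤ s) :
    ∑ l ∈ Finset.univ.filter (fun l : Fin (s+1) => l ≠ 0 ∧ (l:ℕ) < tv), (-1:ℤ)^(l:ℕ) = 0 := by
  have himg : (Finset.univ.filter (fun l : Fin (s+1) => l ≠ 0 ∧ (l:ℕ) < tv)).image Fin.val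
      = Finset.Icc 1 (tv-1) := by
    ext x
    simp only [Finset.mem_image, Finset.mem_filter, Finset.mem_univ, true_and, Finset.mem_Icc]
    constructor
    · rintro ⟨l, ⟨hl0, hlt⟩, rfl⟩
      have : (l:ℕ) ≠ 0 := fun h => hl0 (Fin.ext h)
      omega
    · rintro ⟨hx1, hx2⟩
      refine ⟨⟨x, by omega⟩, ⟨fun h => ?_, by simp; omega⟩, rfl⟩
      have := congrArg Fin.val h; simp at this; omega
  have himg2 : (∑ l ∈ Finset.univ.filter (fun l : Fin (s+1) => l ≠ 0 ∧ (l:ℕ) < tv), (-1:ℤ)^(l:ℕ))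
      = ∑ x ∈ (Finset.univ.filter (fun l : Fin (s+1) => l ≠ 0 ∧ (l:ℕ) < tv)).image Fin.val, (-1:ℤ)^x :=
    (Finset.sum_image (fun a _ b _ h => Fin.val_injective h)).symm
  rw [himg2, himg]
  rcases eq_or_lt_of_le h1 with h | h
  · rw [← h]; simp
  · exact alt_Icc_zero 1 (tv-1) odd_one (Nat.Odd.sub_odd hodd odd_one) (by omega)

end Helpers

lemma delta_cons_zero {R M : Type*} [CommRing R] [AddCommGroup M] [Module R M]
    (φ : Module.End R M) (a : R) {s : ℕ} (m : (Fin (s+1) → ℕ) → M)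
    (K : Fin (s+1) → ℕ) :
    delta φ a m (Fin.cons 0 K) =
      ∑ l : Fin (s+1), ((-1:ℤ) ^ (l:ℕ)) • (if K l = 0 then m (Dt K l) else 0) := by
  have hJ0 : (Fin.cons 0 K : Fin (s+2) → ℕ) 0 = 0 := rfl
  rw [delta, hJ0, Finset.Nat.antidiagonalTuple_zero_right, Finset.sum_singleton]
  have h1 : ((-1 : ℤ) ^ (∑ i : Fin (s+1), (0 : Fin (s+2) → ℕ) i.succ) *
      (Nat.multinomial Finset.univ (0 : Fin (s+2) → ℕ) : ℤ)) •
        (Phi φ a (∑ i : Fin (s+1), ((0:Fin (s+2)→ℕ) i.succ + (Fin.cons 0 K : Fin (s+2) → ℕ) i.succ)) ((0:Fin (s+2)→ℕ) 0))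
          (m (fun i => (0:Fin (s+2)→ℕ) i.succ + (Fin.cons 0 K : Fin (s+2) → ℕ) i.succ)) = m K := by
    have : (fun i : Fin (s+1) => (0:Fin (s+2)→ℕ) i.succ + (Fin.cons 0 K : Fin (s+2) → ℕ) i.succ) = K := by
      funext i; simp
    rw [this]
    simp [Phi, Nat.multinomial]
  rw [h1, Fin.sum_univ_succ]
  have h2 : ((-1 : ℤ) ^ ((0:Fin (s+2)) : ℕ) ^ 1) • (0:M) = 0 := by simp
  have h0term : ((-1 : ℤ) ^ (((0:Fin (s+2)) : ℕ) + 1)) •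
      (if (Fin.cons 0 K : Fin (s+2) → ℕ) 0 = 0 then m (fun i => (Fin.cons 0 K : Fin (s+2) → ℕ) ((0:Fin (s+2)).succAbove i)) else 0) = -(m K) := by
    simp only [Fin.cons_zero, if_pos]
    have : (fun i : Fin (s+1) => (Fin.cons 0 K : Fin (s+2) → ℕ) ((0:Fin (s+2)).succAbove i)) = K := by
      funext i; simp [Fin.succAbove_zero]
    rw [this]; simp
  rw [h0term]
  have h3 : ∀ l : Fin (s+1), ((-1 : ℤ) ^ ((l.succ : ℕ) + 1)) •
      (if (Fin.cons 0 K : Fin (s+2) → ℕ) l.succ = 0 then m (fun i => (Fin.cons 0 K : Fin (s+2) → ℕ) (l.succ.succAbove i)) else 0)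
      = ((-1:ℤ) ^ (l:ℕ)) • (if K l = 0 then m (Dt K l) else 0) := by
    intro l
    have hc : (Fin.cons 0 K : Fin (s+2) → ℕ) l.succ = K l := Fin.cons_succ _ _ _
    have ht : (fun i : Fin (s+1) => (Fin.cons 0 K : Fin (s+2) → ℕ) (l.succ.succAbove i)) = Dt K l := by
      funext i
      induction i using Fin.cases with
      | zero => rw [Fin.succ_succAbove_zero]; simp [Dt]
      | succ i' => rw [Fin.succ_succAbove_succ]; simp [Dt]
    rw [hc, ht]
    have : ((-1 : ℤ) ^ ((l.succ : ℕ) + 1)) = (-1:ℤ) ^ (l:ℕ) := by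
      rw [Fin.val_succ]; ring
    rw [this]
  rw [Finset.sum_congr rfl (fun l _ => h3 l)]
  abel

/-- Lemma 9.2 of the paper: for `K` with leading entry `0`, the coefficient `m_K`
of any solution of `δ^s(m) = n` is determined by the `m_I` with `I ∈ Λ₁` of the same total degree
and by `n_{(0,K)}`. (The paper's dimension `s ≥ 1` is encoded as `s + 1` for `s : ℕ`.) -/
theorem statement10 {R M : Type*} [CommRing R] [AddCommGroup M] [Module R M]
    (φ : Module.End R M) (a : R) (s : ℕ) (K : Fin (s + 1) → ℕ) (hK : K 0 = 0) :
    ∃ (z : (Fin (s + 1) → ℕ) → ℤ) (ε : ℤ),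
      (∀ I, z I = -1 ∨ z I = 0 ∨ z I = 1) ∧
      (ε = -1 ∨ ε = 0 ∨ ε = 1) ∧
      (∀ I, ¬ Lambda1 I → z I = 0) ∧
      (∀ I : Fin (s + 1) → ℕ, (∑ i, I i) ≠ (∑ i, K i) → z I = 0) ∧
      (∀ (m : (Fin (s + 1) → ℕ) → M) (n : (Fin (s + 2) → ℕ) → M),
        delta φ a m = n →
        m K = (∑ I ∈ Finset.Nat.antidiagonalTuple (s + 1) (∑ i, K i), z I • m I) +
          ε • n (Fin.cons 0 K)) ∧
      -- (i): if K ∈ Λ₁ one may take ε = 0 and z the indicator of K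
      (Lambda1 K → ε = 0 ∧ z K = 1 ∧ ∀ I ≠ K, z I = 0) ∧
      -- (ii): if K ∉ Λ₁ one may take ε = 1, and z = 0 when all entries of K from the smallest
      -- nonzero index onwards are nonzero
      (¬ Lambda1 K → ε = 1 ∧
        ((∃ j : Fin (s + 1), (∀ j' < j, K j' = 0) ∧ ∀ j'' ≥ j, K j'' ≠ 0) → ∀ I, z I = 0)) := by
  by_cases hΛ : Lambda1 K
  · -- Case K ∈ Λ₁
    refine ⟨fun I => if I = K then 1 else 0, 0, ?_, ?_, ?_, ?_, ?_, ?_, ?_⟩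
    · intro I; by_cases h : I = K <;> simp [h]
    · simp
    · intro I hI
      have : I ≠ K := fun h => hI (h ▸ hΛ)
      simp [this]
    · intro I hI
      have : I ≠ K := fun h => hI (by rw [h])
      simp [this]
    · intro m n _
      have hKmem : K ∈ Finset.Nat.antidiagonalTuple (s+1) (∑ i, K i) :=
        Finset.Nat.mem_antidiagonalTuple.mpr rfl
      rw [zero_smul, add_zero]
      rw [Finset.sum_congr rfl (fun I _ => by
        rw [ite_smul, one_smul, zero_smul] :
          ∀ I ∈ Finset.Nat.antidiagonalTuple (s+1) (∑ i, K i),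
            (if I = K then (1:ℤ) else 0) • m I = if I = K then m I else 0)]
      rw [Finset.sum_ite_eq' _ K m, if_pos hKmem]
    · intro _
      exact ⟨rfl, by simp, fun I hI => by simp [hI]⟩
    · intro h; exact absurd hΛ h
  · -- Case K ∉ Λ₁
    have hex : ∃ t : Fin (s+1), K t ≠ 0 ∧ (∀ j' < t, K j' = 0) ∧ ¬ Even (t:ℕ) := by
      by_contra h
      push_neg at h
      exact hΛ ⟨hK, fun j hj hprev => h j hj hprev⟩
    obtain ⟨t, ht1, ht2, ht3'⟩ := hex
    have ht3 : Odd (t:ℕ) := Nat.not_even_iff_odd.mp ht3'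
    have ht0 : (t:ℕ) ≠ 0 := fun h => ht1 (by rw [show t = 0 from Fin.ext h]; exact hK)
    set St : Finset (Fin (s+1)) := Finset.univ.filter (fun l => l ≠ 0 ∧ K l = 0) with hSt
    set fib : ((Fin (s+1) → ℕ)) → Finset (Fin (s+1)) :=
      fun I => St.filter (fun l => Dt K l = I) with hfib
    set z : (Fin (s+1) → ℕ) → ℤ := fun I => -∑ l ∈ fib I, (-1:ℤ)^(l:ℕ) with hz
    -- fiber closure
    have hcl : ∀ I, ∀ a' ∈ fib I, ∀ b ∈ fib I, ∀ c : Fin (s+1), a' ≤ c → c ≤ b → c ∈ fib I := by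
      intro I a' ha b hb c hac hcb
      simp only [hfib, hSt, Finset.mem_filter, Finset.mem_univ, true_and] at ha hb ⊢
      obtain ⟨⟨ha0, haK⟩, haD⟩ := ha
      obtain ⟨⟨hb0, hbK⟩, hbD⟩ := hb
      have hab : a' ≤ b := le_trans hac hcb
      have hP : StepP K a' b := step_of_Dt_eq K a' b (haD.trans hbD.symm)
      have hPc : StepP K a' c := fun i h1 h2 =>
        hP i h1 (lt_of_lt_of_le h2 (Fin.le_def.mp hcb))
      refine ⟨⟨?_, ?_⟩, ?_⟩
      · intro hc0
        subst hc0
        exact ha0 (le_antisymm (le_of_le_of_eq hac (by rfl)) (Fin.zero_le _)) 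
      · rw [const_of_step K a' b hP c hac hcb]; exact haK
      · rw [← Dt_eq_of_step K a' c hac hPc]; exact haD
    -- fiber elements at indices > t give Λ₁; = t impossible
    have hfib_cases : ∀ I, ∀ l ∈ fib I, (l:ℕ) < (t:ℕ) ∨ ((t:ℕ) < (l:ℕ) ∧ Lambda1 I) := by
      intro I l hl
      simp only [hfib, hSt, Finset.mem_filter, Finset.mem_univ, true_and] at hl
      obtain ⟨⟨hl0, hlK⟩, hlD⟩ := hl
      rcases lt_trichotomy ((l:ℕ)) ((t:ℕ)) with h | h | h
      · exact Or.inl h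
      · exact absurd (by rw [show l = t from Fin.ext h] at hlK; exact hlK) ht1
      · exact Or.inr ⟨h, hlD ▸ Dt_lambda1 K t ht1 ht2 ht3 l h⟩
    -- if the fiber is nonempty and all elements < t, it equals Ft and z I = 0
    have hfib_small : ∀ I, (∀ l ∈ fib I, (l:ℕ) < (t:ℕ)) → z I = 0 := by
      intro I hall
      rcases (fib I).eq_empty_or_nonempty with he | ⟨l₀, hl₀⟩
      · simp [hz, he]
      · have hl₀' := hl₀
        simp only [hfib, hSt, Finset.mem_filter, Finset.mem_univ, true_and] at hl₀'
        obtain ⟨⟨h00, h0K⟩, h0D⟩ := hl₀'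
        have hFt : fib I = Finset.univ.filter (fun l : Fin (s+1) => l ≠ 0 ∧ (l:ℕ) < (t:ℕ)) := by
          ext l
          simp only [hfib, hSt, Finset.mem_filter, Finset.mem_univ, true_and]
          constructor
          · rintro ⟨⟨hl0, hlK⟩, hlD⟩
            exact ⟨hl0, hall l (by simp [hfib, hSt, Finset.mem_filter]; exact ⟨⟨hl0, hlK⟩, hlD⟩)⟩
          · rintro ⟨hl0, hlt⟩
            refine ⟨⟨hl0, ht2 l (Fin.lt_def.mpr hlt)⟩, ?_⟩
            rw [Dt_eq_small K t ht2 l l₀ hlt (hall l₀ hl₀)]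
            exact h0D
        rw [hz]
        simp only
        rw [hFt, sum_Ft (t:ℕ) (by omega) ht3 (by have := t.isLt; have := (hall l₀ hl₀); omega), neg_zero]
    refine ⟨z, 1, ?_, ?_, ?_, ?_, ?_, ?_, ?_⟩
    · intro I
      rcases alt_closed_mem (fib I) (hcl I) with h | h | h <;> rw [hz] <;> simp only <;> rw [h] <;> simp
    · right; right; rfl
    · -- z I = 0 for I ∉ Λ₁
      intro I hI
      apply hfib_small
      intro l hl
      rcases hfib_cases I l hl with h | ⟨_, h⟩
      · exact h
      · exact absurd h hI
    · -- degree condition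
      intro I hI
      have : fib I = ∅ := by
        rw [Finset.filter_eq_empty_iff]
        intro l hl hD
        simp only [hSt, Finset.mem_filter, Finset.mem_univ, true_and] at hl
        exact hI (by rw [← hD, Dt_sum K l hl.2])
      simp [hz, this]
    · -- main identity
      intro m n hmn
      subst hmn
      rw [delta_cons_zero, one_smul]
      have step2 : ∑ l : Fin (s+1), ((-1:ℤ) ^ (l:ℕ)) • (if K l = 0 then m (Dt K l) else 0)
          = ∑ l ∈ Finset.univ.filter (fun l : Fin (s+1) => K l = 0),
              ((-1:ℤ) ^ (l:ℕ)) • m (Dt K l) := by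
        rw [Finset.sum_filter]
        exact Finset.sum_congr rfl (fun l _ => by rw [smul_ite, smul_zero])
      rw [step2]
      have h0mem : (0 : Fin (s+1)) ∈ Finset.univ.filter (fun l : Fin (s+1) => K l = 0) := by
        simp [hK]
      rw [← Finset.add_sum_erase _ _ h0mem]
      have herase : (Finset.univ.filter (fun l : Fin (s+1) => K l = 0)).erase 0 = St := by
        ext l
        simp only [hSt, Finset.mem_erase, Finset.mem_filter, Finset.mem_univ, true_and]
      rw [herase]
      have h0term : ((-1:ℤ) ^ ((0:Fin (s+1)):ℕ)) • m (Dt K 0) = m K := by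
        rw [Dt_zero K hK]; simp
      rw [h0term]
      have step5 : ∑ I ∈ Finset.Nat.antidiagonalTuple (s + 1) (∑ i, K i), z I • m I
          = -∑ l ∈ St, ((-1:ℤ) ^ (l:ℕ)) • m (Dt K l) := by
        have hmaps : ∀ l ∈ St, Dt K l ∈ Finset.Nat.antidiagonalTuple (s + 1) (∑ i, K i) := by
          intro l hl
          simp only [hSt, Finset.mem_filter, Finset.mem_univ, true_and] at hl
          exact Finset.Nat.mem_antidiagonalTuple.mpr (Dt_sum K l hl.2)
        rw [← Finset.sum_fiberwise_of_maps_to hmaps (fun l => ((-1:ℤ) ^ (l:ℕ)) • m (Dt K l))]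
        rw [← Finset.sum_neg_distrib]
        refine Finset.sum_congr rfl (fun I _ => ?_)
        have hcg : ∑ l ∈ fib I, ((-1:ℤ)^(l:ℕ)) • m (Dt K l)
            = ∑ l ∈ fib I, ((-1:ℤ)^(l:ℕ)) • m I :=
          Finset.sum_congr rfl (fun l hl => by
            simp only [hfib, Finset.mem_filter] at hl; rw [hl.2])
        rw [hcg, hz, neg_smul, Finset.sum_smul]
      rw [step5]
      abel
    · intro h; exact absurd h hΛ
    · -- (ii)
      intro _
      refine ⟨rfl, ?_⟩
      rintro ⟨j, hj1, hj2⟩ I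
      have hjt : j = t := by
        have h1 : ¬ t < j := fun h => ht1 (hj1 t h)
        have h2 : ¬ j < t := fun h => (hj2 j le_rfl) (ht2 j h)
        exact le_antisymm (not_lt.mp h1) (not_lt.mp h2)
      subst hjt
      apply hfib_small
      intro l hl
      rcases hfib_cases I l hl with h | ⟨hgt, _⟩
      · exact h
      · exfalso
        simp only [hfib, hSt, Finset.mem_filter, Finset.mem_univ, true_and] at hl
        exact hj2 l (Fin.le_def.mpr (le_of_lt hgt)) hl.1.2
end

section
/- Let notation be as in the context and let s ≥ 1. For every K = (k_1,…,k_s) ∈ ℕ^s with k_1 ≥ 2 there exist integers z_{K,I} ∈ {−1,0,1} for I ∈ Λ₂^s, depending only on s and K, which vanish unless both |I| = |K| and k_t = 0 for some index 2 ≤ t ≤ s (so only finitely many are nonzero), such that: for all families m : ℕ^s → M and n : ℕ^{s+1} → M with δ^s(m) = n, one has m_K = Σ_{I∈Λ₂^s} z_{K,I}·m_I + (φ − (|K|−1)·a)(m_{K−E_1}) − Σ_{l=2}^{s} m_{K−E_1+E_l} − n_{(1,K−E_1)}, where (1, K−E_1) := (1, k_1−1, k_2, …, k_s) ∈ ℕ^{s+1}.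 -/
lemma altIcc (a b : ℕ) : (∑ i ∈ Finset.Icc a b, (-1:ℤ)^i)
    = if b < a then 0 else if Even (b - a) then (-1)^a else 0 := by
  induction b with
  | zero =>
      rcases Nat.eq_zero_or_pos a with rfl|h
      · simp
      · rw [Finset.Icc_eq_empty (by omega)]; simp [h]
  | succ b ih =>
      rcases lt_or_ge (b+1) a with h|h
      · rw [Finset.Icc_eq_empty (by omega)]; simp [h]
      · rw [Finset.sum_Icc_succ_top h, ih]
        by_cases hba : b < a
        · have : a = b + 1 := by omega
          subst this
          simp
        · have h1 : ¬ (b+1) < a := by omega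
          simp only [if_neg hba, if_neg h1]
          by_cases he : Even (b - a)
          · rw [if_pos he, if_neg (by
              have : b+1-a = (b-a)+1 := by omega
              rw [this]; simp [Nat.even_add_one, he])]
            have hb1 : (b+1) = a + ((b - a) + 1) := by omega
            rw [hb1, pow_add, pow_add, he.neg_one_pow]
            ring
          · rw [if_neg he, if_pos (by
              have : b+1-a = (b-a)+1 := by omega
              rw [this]; simp [Nat.even_add_one, he])]
            have hb1 : (b+1) = a + ((b - a) + 1) := by omega
            have ho : Even ((b-a)+1) := by simp [Nat.even_add_one, he]
            rw [hb1, pow_add, ho.neg_one_pow]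
            ring

lemma sum_eq_one_exists {n : ℕ} {v : Fin n → ℕ} (h : ∑ i, v i = 1) :
    ∃ l, v = Pi.single l 1 := by
  have h1 : ∃ l, v l ≠ 0 := by
    by_contra hc
    push_neg at hc
    simp [hc] at h
  obtain ⟨l, hl⟩ := h1
  have hle : v l ≤ 1 := h ▸ Finset.single_le_sum (f := v) (fun i _ => Nat.zero_le _)
    (Finset.mem_univ l)
  have hvl : v l = 1 := by omega
  have hrest : ∑ i ∈ Finset.univ.erase l, v i = 0 := by
    have := Finset.add_sum_erase Finset.univ v (Finset.mem_univ l)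
    omega
  refine ⟨l, funext fun j => ?_⟩
  rcases eq_or_ne j l with rfl|hj
  · simp [hvl]
  · rw [Pi.single_eq_of_ne hj]
    exact Finset.sum_eq_zero_iff.mp hrest j (Finset.mem_erase.mpr ⟨hj, Finset.mem_univ j⟩)

lemma alt_sum_convex {n : ℕ} (S : Finset (Fin n))
    (hconv : ∀ l l' q : Fin n, l ∈ S → l' ∈ S → l ≤ q → q ≤ l' → q ∈ S) :
    (∑ l ∈ S, (-1:ℤ)^((l:ℕ)+1)) = -1 ∨ (∑ l ∈ S, (-1:ℤ)^((l:ℕ)+1)) = 0 ∨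
      (∑ l ∈ S, (-1:ℤ)^((l:ℕ)+1)) = 1 := by
  rcases S.eq_empty_or_nonempty with rfl|h
  · simp
  have hS : S = Finset.Icc (S.min' h) (S.max' h) := by
    ext q
    simp only [Finset.mem_Icc]
    exact ⟨fun hq => ⟨S.min'_le q hq, S.le_max' q hq⟩,
      fun ⟨h1, h2⟩ => hconv _ _ q (S.min'_mem h) (S.max'_mem h) h1 h2⟩
  rw [hS]
  have : (∑ l ∈ Finset.Icc (S.min' h) (S.max' h), (-1:ℤ)^((l:ℕ)+1))
      = ∑ x ∈ Finset.Icc ((S.min' h : ℕ)) ((S.max' h : ℕ)), (-1:ℤ)^(x+1) := by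
    rw [← Fin.map_valEmbedding_Icc, Finset.sum_map]
    rfl
  rw [this]
  have h2 : (∑ x ∈ Finset.Icc ((S.min' h : ℕ)) ((S.max' h : ℕ)), (-1:ℤ)^(x+1))
      = (∑ x ∈ Finset.Icc ((S.min' h : ℕ)) ((S.max' h : ℕ)), (-1:ℤ)^x) * (-1) := by
    rw [Finset.sum_mul]
    exact Finset.sum_congr rfl fun x _ => by rw [pow_succ]
  rw [h2, altIcc]
  split_ifs
  · right; left; ring
  · rcases Nat.even_or_odd ((S.min' h : ℕ)) with he|ho
    · left; rw [he.neg_one_pow]; ring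
    · right; right; rw [ho.neg_one_pow]; ring
  · right; left; ring

lemma cond_convex {n : ℕ} (J : Fin (n+1) → ℕ) (l l' q : Fin (n+1))
    (hlq : l ≤ q) (hql : q ≤ l')
    (hl0 : J l = 0) (hconst0 : True)
    (heq : (fun i => J (l.succAbove i)) = (fun i => J (l'.succAbove i))) :
    J q = 0 ∧ (fun i => J (q.succAbove i)) = (fun i => J (l.succAbove i)) := by
  classical
  set f : ℕ → ℕ := fun x => if h : x < n+1 then J ⟨x, h⟩ else 0 with hfdef
  have hf : ∀ (x : ℕ) (h : x < n+1), f x = J ⟨x, h⟩ := fun x h => dif_pos h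
  have hstep : ∀ x, (l:ℕ) ≤ x → x < (l':ℕ) → f (x+1) = f x := by
    intro x h1 h2
    have hx : x < n := by have := l'.isLt; omega
    set i : Fin n := ⟨x, hx⟩ with hi
    have e1 : l.succAbove i = ⟨x+1, by omega⟩ := by
      rw [Fin.succAbove_of_le_castSucc l i (by rw [Fin.le_def]; exact h1)]
      rfl
    have e2 : l'.succAbove i = ⟨x, by omega⟩ := by
      rw [Fin.succAbove_of_castSucc_lt l' i (by rw [Fin.lt_def]; exact h2)]
      rfl
    have hc := congrFun heq i
    rw [e1, e2] at hc
    rw [hf (x+1) (by omega), hf x (by omega)]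
    exact hc
  have hconst : ∀ x, (l:ℕ) ≤ x → x ≤ (l':ℕ) → f x = 0 := by
    intro x hx
    induction x, hx using Nat.le_induction with
    | base =>
        intro _
        rw [hf (l:ℕ) l.isLt]
        simpa using hl0
    | succ y hy ih =>
        intro hy1
        rw [hstep y hy (by omega)]
        exact ih (by omega)
  constructor
  · have := hconst (q:ℕ) hlq hql
    rw [hf (q:ℕ) q.isLt] at this
    simpa using this
  · funext i
    by_cases h1 : (i:ℕ) < (l:ℕ)
    · rw [Fin.succAbove_of_castSucc_lt q i (by rw [Fin.lt_def]; simp; omega),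
        Fin.succAbove_of_castSucc_lt l i (by rw [Fin.lt_def]; simpa using h1)]
    · by_cases h2 : (i:ℕ) < (q:ℕ)
      · rw [Fin.succAbove_of_castSucc_lt q i (by rw [Fin.lt_def]; simpa using h2),
          Fin.succAbove_of_le_castSucc l i (by rw [Fin.le_def]; simp; omega)]
        have eci : Fin.castSucc i = ⟨(i:ℕ), by omega⟩ := by ext; simp
        have esi : Fin.succ i = ⟨(i:ℕ)+1, by omega⟩ := by ext; simp
        have ea : J (Fin.castSucc i) = 0 := by
          have := hconst (i:ℕ) (by omega) (by omega)
          rw [hf (i:ℕ) (by omega)] at this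
          rw [eci]; exact this
        have eb : J (Fin.succ i) = 0 := by
          have := hconst ((i:ℕ)+1) (by omega) (by omega)
          rw [hf ((i:ℕ)+1) (by omega)] at this
          rw [esi]; exact this
        rw [ea, eb]
      · rw [Fin.succAbove_of_le_castSucc q i (by rw [Fin.le_def]; simp; omega),
          Fin.succAbove_of_le_castSucc l i (by rw [Fin.le_def]; simp; omega)]

section Eval
variable {R M : Type*} [CommRing R] [AddCommGroup M] [Module R M]
  (φ : Module.End R M) (a : R) {s : ℕ}

lemma multinomial_single {n : ℕ} (l : Fin n) :
    Nat.multinomial Finset.univ (Pi.single l 1) = 1 := by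
  have hs : ∑ i, (Pi.single l 1 : Fin n → ℕ) i = 1 := Fintype.sum_pi_single' l 1
  have hp : (∏ i, ((Pi.single l 1 : Fin n → ℕ) i).factorial) = 1 := by
    apply Finset.prod_eq_one
    intro i _
    rcases eq_or_ne i l with rfl|h
    · simp
    · simp [Pi.single_eq_of_ne h]
  have := Nat.multinomial_spec Finset.univ (Pi.single l 1 : Fin n → ℕ)
  rw [hs, hp] at this
  simpa using this

lemma delta_eval (K : Fin (s + 1) → ℕ) (hK : 2 ≤ K 0)
    (m : (Fin (s + 1) → ℕ) → M) :
    delta φ a m (Fin.cons 1 (Function.update K 0 (K 0 - 1)))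
      = (∑ l : Fin (s + 2),
          ((-1 : ℤ) ^ ((l : ℕ) + 1)) •
            (if (Fin.cons 1 (Function.update K 0 (K 0 - 1)) : Fin (s+2) → ℕ) l = 0 then
              m (fun i => (Fin.cons 1 (Function.update K 0 (K 0 - 1)) : Fin (s+2) → ℕ) (l.succAbove i)) else 0))
        + (φ - ((((∑ i, K i) - 1 : ℕ) : R) * a) • 1) (m (Function.update K 0 (K 0 - 1)))
        - m K
        - ∑ l ∈ Finset.univ.erase (0 : Fin (s + 1)),
            m (Function.update (Function.update K 0 (K 0 - 1)) l (K l + 1)) := by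
  classical
  set T : Fin (s+1) → ℕ := Function.update K 0 (K 0 - 1) with hT
  set J : Fin (s+2) → ℕ := Fin.cons 1 T with hJ
  have hJ0 : J 0 = 1 := rfl
  have hJsucc : ∀ i : Fin (s+1), J i.succ = T i := fun i => by
    simp [hJ]
  have hK0le : K 0 ≤ ∑ i, K i :=
    Finset.single_le_sum (f := K) (fun i _ => Nat.zero_le _) (Finset.mem_univ 0)
  have hsumT : ∑ i, T i = (∑ i, K i) - 1 := by
    rw [hT, Finset.sum_update_of_mem (Finset.mem_univ 0)]
    have h2 := Finset.add_sum_erase Finset.univ K (Finset.mem_univ 0)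
    rw [Finset.sdiff_singleton_eq_erase]
    omega
  -- reindex the first sum over Pi.single
  have hreindex : (∑ v ∈ Finset.Nat.antidiagonalTuple (s + 2) (J 0),
        ((-1 : ℤ) ^ (∑ i : Fin (s+1), v i.succ) * (Nat.multinomial Finset.univ v : ℤ)) •
          (Phi φ a (∑ i : Fin (s+1), (v i.succ + J i.succ)) (v 0))
            (m (fun i => v i.succ + J i.succ)))
      = ∑ l : Fin (s+2),
        (fun v : Fin (s+2) → ℕ =>
          ((-1 : ℤ) ^ (∑ i : Fin (s+1), v i.succ) * (Nat.multinomial Finset.univ v : ℤ)) •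
          (Phi φ a (∑ i : Fin (s+1), (v i.succ + J i.succ)) (v 0))
            (m (fun i => v i.succ + J i.succ))) (Pi.single l 1) := by
    rw [hJ0]
    refine (Finset.sum_bij (fun (l : Fin (s+2)) _ => Pi.single l 1) ?_ ?_ ?_ ?_).symm
    · intro l _
      rw [Finset.Nat.mem_antidiagonalTuple]
      exact Fintype.sum_pi_single' l 1
    · intro l1 _ l2 _ h
      by_contra hne
      have h2 := congrFun h l1
      simp [Pi.single_apply, hne] at h2
    · intro v hv
      rw [Finset.Nat.mem_antidiagonalTuple] at hv
      obtain ⟨l, rfl⟩ := sum_eq_one_exists hv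
      exact ⟨l, Finset.mem_univ l, rfl⟩
    · intro l _
      rfl
  have Phi_zero : ∀ c, Phi φ a c 0 = 1 := fun c => by simp [Phi]
  have Phi_one : ∀ c, Phi φ a c 1 = φ - (((c:ℕ):R) * a) • 1 := fun c => by
    rw [Phi]
    show ([φ - ((((c + 0 : ℕ)) : R) * a) • 1]).prod = _
    rw [List.prod_singleton]
    norm_num
  -- the l = 0 term
  have hv0 : ∀ i : Fin (s+1), (Pi.single (0 : Fin (s+2)) 1 : Fin (s+2) → ℕ) i.succ = 0 :=
    fun i => Pi.single_eq_of_ne (Fin.succ_ne_zero i) 1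
  have e3 : (fun i => (Pi.single (0 : Fin (s+2)) 1 : Fin (s+2) → ℕ) i.succ + J i.succ) = T :=
    funext fun i => by rw [hv0 i, hJsucc i, Nat.zero_add]
  have hterm0 : (fun v : Fin (s+2) → ℕ =>
          ((-1 : ℤ) ^ (∑ i : Fin (s+1), v i.succ) * (Nat.multinomial Finset.univ v : ℤ)) •
          (Phi φ a (∑ i : Fin (s+1), (v i.succ + J i.succ)) (v 0))
            (m (fun i => v i.succ + J i.succ))) (Pi.single 0 1)
      = (φ - ((((∑ i, K i) - 1 : ℕ) : R) * a) • 1) (m T) := by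
    have e1 : ∑ i : Fin (s+1), (Pi.single (0 : Fin (s+2)) 1 : Fin (s+2) → ℕ) i.succ = 0 := by
      simp [hv0]
    have e2 : ∑ i : Fin (s+1),
        ((Pi.single (0 : Fin (s+2)) 1 : Fin (s+2) → ℕ) i.succ + J i.succ) = (∑ i, K i) - 1 := by
      calc ∑ i : Fin (s+1), ((Pi.single (0 : Fin (s+2)) 1 : Fin (s+2) → ℕ) i.succ + J i.succ)
          = ∑ i : Fin (s+1), T i := by rw [e3]
        _ = (∑ i, K i) - 1 := hsumT
    simp only [e1, e2, e3, multinomial_single, Pi.single_eq_same, Phi_one]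
    simp only [pow_zero, Nat.cast_one, mul_one, one_smul]
    rw [hsumT]
  -- the successor terms
  have hw : ∀ r : Fin (s+1), (fun i => (Pi.single (r.succ : Fin (s+2)) 1 : Fin (s+2) → ℕ) i.succ
      + J i.succ) = fun i => (Pi.single r 1 : Fin (s+1) → ℕ) i + T i := by
    intro r
    funext i
    rw [hJsucc i]
    rcases eq_or_ne i r with rfl|h
    · rw [Pi.single_eq_same, Pi.single_eq_same]
    · rw [Pi.single_eq_of_ne h, Pi.single_eq_of_ne (fun hc => h (Fin.succ_injective _ hc))]
  have hsum1 : ∀ r : Fin (s+1),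
      ∑ i : Fin (s+1), (Pi.single (r.succ : Fin (s+2)) 1 : Fin (s+2) → ℕ) i.succ = 1 := by
    intro r
    have : ∀ i : Fin (s+1), (Pi.single (r.succ : Fin (s+2)) 1 : Fin (s+2) → ℕ) i.succ
        = (Pi.single r 1 : Fin (s+1) → ℕ) i := by
      intro i
      rcases eq_or_ne i r with rfl|h
      · rw [Pi.single_eq_same, Pi.single_eq_same]
      · rw [Pi.single_eq_of_ne h, Pi.single_eq_of_ne (fun hc => h (Fin.succ_injective _ hc))]
    rw [Finset.sum_congr rfl fun i _ => this i]
    exact Fintype.sum_pi_single' r 1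
  have htermsucc : ∀ r : Fin (s+1), (fun v : Fin (s+2) → ℕ =>
          ((-1 : ℤ) ^ (∑ i : Fin (s+1), v i.succ) * (Nat.multinomial Finset.univ v : ℤ)) •
          (Phi φ a (∑ i : Fin (s+1), (v i.succ + J i.succ)) (v 0))
            (m (fun i => v i.succ + J i.succ))) (Pi.single r.succ 1)
      = - m (fun i => (Pi.single r 1 : Fin (s+1) → ℕ) i + T i) := by
    intro r
    have hz : (Pi.single (r.succ : Fin (s+2)) 1 : Fin (s+2) → ℕ) 0 = 0 :=
      Pi.single_eq_of_ne (Fin.succ_ne_zero r).symm 1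
    simp only [hsum1 r, hz, Phi_zero, multinomial_single, hw r, pow_one,
      Nat.cast_one, mul_one, Module.End.one_apply]
    simp
  have hw0 : (fun i => (Pi.single (0:Fin (s+1)) 1 : Fin (s+1) → ℕ) i + T i) = K := by
    funext i
    rcases eq_or_ne i 0 with rfl|h
    · rw [Pi.single_eq_same, hT, Function.update_self]
      omega
    · rw [Pi.single_eq_of_ne h 1, hT, Function.update_of_ne h, Nat.zero_add]
  have hwr : ∀ r : Fin (s+1), r ≠ 0 →
      (fun i => (Pi.single r 1 : Fin (s+1) → ℕ) i + T i)
        = Function.update T r (K r + 1) := by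
    intro r hr
    funext i
    rcases eq_or_ne i r with rfl|h
    · rw [Pi.single_eq_same, Function.update_self, hT, Function.update_of_ne hr]
      omega
    · rw [Pi.single_eq_of_ne h 1, Function.update_of_ne h, Nat.zero_add]
  have hsuccsum : ∑ r : Fin (s+1),
        (- m (fun i => (Pi.single r 1 : Fin (s+1) → ℕ) i + T i))
      = - m K - ∑ l ∈ Finset.univ.erase (0 : Fin (s+1)),
          m (Function.update T l (K l + 1)) := by
    rw [← Finset.add_sum_erase Finset.univ
      (fun r : Fin (s+1) => - m (fun i => (Pi.single r 1 : Fin (s+1) → ℕ) i + T i))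
      (Finset.mem_univ 0), hw0]
    have hstep2 : ∑ r ∈ Finset.univ.erase (0 : Fin (s+1)),
          (- m (fun i => (Pi.single r 1 : Fin (s+1) → ℕ) i + T i))
        = ∑ r ∈ Finset.univ.erase (0 : Fin (s+1)), - m (Function.update T r (K r + 1)) :=
      Finset.sum_congr rfl (fun r hr => by rw [hwr r (Finset.ne_of_mem_erase hr)])
    rw [hstep2, Finset.sum_neg_distrib]
    abel
  simp only [delta]
  rw [hreindex, Fin.sum_univ_succ, hterm0]
  rw [Finset.sum_congr rfl (fun r _ => htermsucc r), hsuccsum]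
  abel
end Eval

/-- Lemma 9.4 of the paper: for `K` with leading entry `≥ 2`, the coefficient
`m_K` of any solution of `δ^s(m) = n` is expressed through the `m_I` with `I ∈ Λ₂` (leading
entry `1`), `m_{K-E₁}`, `m_{K-E₁+E_l}` and `n_{(1,K-E₁)}`. (The paper's dimension `s ≥ 1` is
encoded as `s + 1` for `s : ℕ`; `Λ₂ = {I : I 0 = 1}`.) -/
theorem statement11 {R M : Type*} [CommRing R] [AddCommGroup M] [Module R M]
    (φ : Module.End R M) (a : R) (s : ℕ) (K : Fin (s + 1) → ℕ) (hK : 2 ≤ K 0) :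
    ∃ z : (Fin (s + 1) → ℕ) → ℤ,
      (∀ I, z I = -1 ∨ z I = 0 ∨ z I = 1) ∧
      (∀ I, I 0 ≠ 1 → z I = 0) ∧
      (∀ I : Fin (s + 1) → ℕ, (∑ i, I i) ≠ (∑ i, K i) → z I = 0) ∧
      ((¬ ∃ t : Fin (s + 1), t ≠ 0 ∧ K t = 0) → ∀ I, z I = 0) ∧
      (∀ (m : (Fin (s + 1) → ℕ) → M) (n : (Fin (s + 2) → ℕ) → M),
        delta φ a m = n →
        m K = (∑ I ∈ Finset.Nat.antidiagonalTuple (s + 1) (∑ i, K i), z I • m I)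
          + (φ - ((((∑ i, K i) - 1 : ℕ) : R) * a) • 1) (m (Function.update K 0 (K 0 - 1)))
          - (∑ l ∈ Finset.univ.erase (0 : Fin (s + 1)),
              m (Function.update (Function.update K 0 (K 0 - 1)) l (K l + 1)))
          - n (Fin.cons 1 (Function.update K 0 (K 0 - 1)))) := by
  classical
  set T : Fin (s+1) → ℕ := Function.update K 0 (K 0 - 1) with hT
  set J : Fin (s+2) → ℕ := Fin.cons 1 T with hJ
  have hJ0 : J 0 = 1 := by simp [hJ]
  have hJsucc : ∀ i : Fin (s+1), J i.succ = T i := fun i => by simp [hJ]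
  have hT0 : T 0 = K 0 - 1 := by simp [hT]
  have hTr : ∀ r : Fin (s+1), r ≠ 0 → T r = K r := fun r hr => by
    rw [hT]; exact Function.update_of_ne hr _ _
  have hK0le : K 0 ≤ ∑ i, K i :=
    Finset.single_le_sum (f := K) (fun i _ => Nat.zero_le _) (Finset.mem_univ 0)
  have hsumT : ∑ i, T i = (∑ i, K i) - 1 := by
    rw [hT, Finset.sum_update_of_mem (Finset.mem_univ 0)]
    have h2 := Finset.add_sum_erase Finset.univ K (Finset.mem_univ 0)
    rw [Finset.sdiff_singleton_eq_erase]
    omega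
  have hsumJ : ∑ l, J l = ∑ i, K i := by
    rw [Fin.sum_univ_succ, hJ0,
      Finset.sum_congr rfl (fun i _ => hJsucc i), hsumT]
    omega
  have hremsum : ∀ l : Fin (s+2), J l = 0 →
      ∑ i : Fin (s+1), J (l.succAbove i) = ∑ i, K i := by
    intro l hl
    rw [← hsumJ, Fin.sum_univ_succAbove J l, hl, Nat.zero_add]
  have hl0 : ∀ l : Fin (s+2), J l = 0 → l ≠ 0 := by
    intro l hl h
    rw [h, hJ0] at hl
    exact one_ne_zero hl
  set z : (Fin (s+1) → ℕ) → ℤ := fun I => ∑ l : Fin (s+2),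
    if J l = 0 ∧ (fun i => J (l.succAbove i)) = I then (-1:ℤ)^((l:ℕ)+1) else 0 with hz
  refine ⟨z, ?_, ?_, ?_, ?_, ?_⟩
  · -- values in {-1,0,1}
    intro I
    simp only [hz]
    have hrw : (∑ l : Fin (s+2),
        if J l = 0 ∧ (fun i => J (l.succAbove i)) = I then (-1:ℤ)^((l:ℕ)+1) else 0)
        = ∑ l ∈ Finset.univ.filter
            (fun l : Fin (s+2) => J l = 0 ∧ (fun i => J (l.succAbove i)) = I),
            (-1:ℤ)^((l:ℕ)+1) := (Finset.sum_filter _ _).symm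
    rw [hrw]
    apply alt_sum_convex
    intro l l' q hl hl' hlq hql
    rw [Finset.mem_filter] at hl hl' ⊢
    obtain ⟨-, hl1, hl2⟩ := hl
    obtain ⟨-, hl1', hl2'⟩ := hl'
    obtain ⟨hq1, hq2⟩ := cond_convex J l l' q hlq hql hl1 trivial (hl2.trans hl2'.symm)
    exact ⟨Finset.mem_univ q, hq1, hq2.trans hl2⟩
  · -- vanishing unless I 0 = 1
    intro I hI
    simp only [hz]
    apply Finset.sum_eq_zero
    intro l _
    rw [if_neg]
    rintro ⟨h0, hrem⟩
    have hlne := hl0 l h0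
    have hpos : (0 : Fin (s+2)) < l := Fin.pos_of_ne_zero hlne
    have hc : J (l.succAbove 0) = I 0 := congrFun hrem 0
    rw [Fin.succAbove_of_castSucc_lt l 0 (by rwa [Fin.castSucc_zero]), Fin.castSucc_zero,
      hJ0] at hc
    exact hI hc.symm
  · -- vanishing unless sums agree
    intro I hI
    simp only [hz]
    apply Finset.sum_eq_zero
    intro l _
    rw [if_neg]
    rintro ⟨h0, hrem⟩
    apply hI
    rw [← hrem]
    exact hremsum l h0
  · -- vanishing if K has no zero entry away from 0
    intro hnot I
    simp only [hz]
    apply Finset.sum_eq_zero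
    intro l _
    rw [if_neg]
    rintro ⟨h0, -⟩
    rcases Fin.eq_zero_or_eq_succ l with rfl|⟨t, rfl⟩
    · rw [hJ0] at h0; exact one_ne_zero h0
    · rw [hJsucc t] at h0
      rcases eq_or_ne t 0 with rfl|ht
      · rw [hT0] at h0; omega
      · exact hnot ⟨t, ht, by rw [← hTr t ht]; exact h0⟩
  · -- the main identity
    intro m n hmn
    have hde := delta_eval φ a K hK m
    rw [← hT, ← hJ] at hde
    have h1 : _ = n J := (hde.symm).trans (congrFun hmn J)
    have hZB : (∑ I ∈ Finset.Nat.antidiagonalTuple (s + 1) (∑ i, K i), z I • m I)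
        = ∑ l : Fin (s + 2),
            ((-1 : ℤ) ^ ((l : ℕ) + 1)) •
              (if J l = 0 then m (fun i => J (l.succAbove i)) else 0) := by
      calc (∑ I ∈ Finset.Nat.antidiagonalTuple (s + 1) (∑ i, K i), z I • m I)
          = ∑ I ∈ Finset.Nat.antidiagonalTuple (s + 1) (∑ i, K i), ∑ l : Fin (s+2),
              (if J l = 0 ∧ (fun i => J (l.succAbove i)) = I
                then ((-1:ℤ)^((l:ℕ)+1)) • m I else 0) := by
            refine Finset.sum_congr rfl fun I _ => ?_
            rw [hz]
            rw [Finset.sum_smul]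
            exact Finset.sum_congr rfl fun l _ => by rw [ite_smul, zero_smul]
        _ = ∑ l : Fin (s+2), ∑ I ∈ Finset.Nat.antidiagonalTuple (s + 1) (∑ i, K i),
              (if J l = 0 ∧ (fun i => J (l.succAbove i)) = I
                then ((-1:ℤ)^((l:ℕ)+1)) • m I else 0) := Finset.sum_comm
        _ = ∑ l : Fin (s + 2),
            ((-1 : ℤ) ^ ((l : ℕ) + 1)) •
              (if J l = 0 then m (fun i => J (l.succAbove i)) else 0) := by
            refine Finset.sum_congr rfl fun l _ => ?_
            by_cases hJl : J l = 0
            · simp only [hJl, true_and, if_pos]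
              have hmem : (fun i => J (l.succAbove i)) ∈
                  Finset.Nat.antidiagonalTuple (s + 1) (∑ i, K i) := by
                rw [Finset.Nat.mem_antidiagonalTuple]
                exact hremsum l hJl
              rw [Finset.sum_ite_eq (Finset.Nat.antidiagonalTuple (s + 1) (∑ i, K i))
                (fun i => J (l.succAbove i)) (fun I => ((-1:ℤ)^((l:ℕ)+1)) • m I),
                if_pos hmem]
            · simp [hJl]
    rw [hZB, ← h1]
    abel
end

section
/- Let notation be as in the context and let t ≥ 2. For every I ∈ ℕ^t there exist integers z_{I,K} for K ∈ Λ^t with |K| ≤ |I|, depending only on t and I, such that: every family m : ℕ^t → M with δ^t(m) = 0 satisfies m_I = Σ_{K ∈ Λ^t, |K| ≤ |I|} z_{I,K}·Φ_{|K|, |I|−|K|}(m_K). Moreover, when I ∈ Λ^t one may take z_{I,I} = 1 and z_{I,K} = 0 for K ≠ I. (In particular, an element of the kernel of δ^t is determined by the finite collection of its coefficients indexed by Λ^t in each total degree.) -/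
/-- `Λ₃` (0-indexed, tuples of length `s+1`): `I 0 = 1` and the smallest nonzero index `≥ 1`
(if any) is odd and `≥ 3` (even and `≥ 4` 1-indexed); `(1,0,…,0)` is included. -/
def Lambda3 {s : ℕ} (I : Fin (s + 1) → ℕ) : Prop :=
  I 0 = 1 ∧ ∀ j : Fin (s + 1), I j ≠ 0 → 1 ≤ (j : ℕ) →
    (∀ j' : Fin (s + 1), 1 ≤ (j' : ℕ) → j' < j → I j' = 0) → (Odd (j : ℕ) ∧ 3 ≤ (j : ℕ))

/-- `Λ₄` (0-indexed, tuples of length `s+2 ≥ 2`): `I 0 = 1` and `I 1 ≥ 1`. -/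
def Lambda4 {s : ℕ} (I : Fin (s + 2) → ℕ) : Prop :=
  I 0 = 1 ∧ 1 ≤ I 1

/-- `Λ := Λ₁ ∪ Λ₃ ∪ Λ₄` (Definition 9.7 of the paper). -/
def LambdaAll {s : ℕ} (I : Fin (s + 2) → ℕ) : Prop :=
  Lambda1 I ∨ Lambda3 I ∨ Lambda4 I

namespace CechAlexander

section Phi

variable {R M : Type*} [CommRing R] [AddCommGroup M] [Module R M] (φ : Module.End R M) (a : R)

@[simp]
lemma Phi_zero (c : ℕ) : Phi φ a c 0 = 1 := by
  simp [Phi]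

lemma Phi_add (c r r' : ℕ) : Phi φ a c (r + r') = Phi φ a c r * Phi φ a (c + r) r' := by
  simp only [Phi, List.range_add, List.map_append, List.prod_append, List.map_map]
  congr 3
  ext h
  simp [add_assoc]

lemma Phi_eq_aeval (c r : ℕ) :
    Phi φ a c r = Polynomial.aeval φ
      ((List.range r).map fun h => Polynomial.X - Polynomial.C (((c + h : ℕ) : R) * a)).prod := by
  simp only [Phi, map_list_prod, List.map_map, Function.comp_def, map_sub, Polynomial.aeval_X,
    Polynomial.aeval_C, Algebra.algebraMap_eq_smul_one]

lemma Phi_commute (c r c' r' : ℕ) : Commute (Phi φ a c r) (Phi φ a c' r') := by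
  rw [Phi_eq_aeval, Phi_eq_aeval]
  exact (Commute.all _ _).map _

lemma Phi_mul_Phi_of_le {d k n : ℕ} (hdk : d ≤ k) (hkn : k ≤ n) :
    Phi φ a k (n - k) * Phi φ a d (k - d) = Phi φ a d (n - d) := by
  rw [(Phi_commute φ a _ _ _ _).eq, show n - d = (k - d) + (n - k) by omega, Phi_add,
    Nat.add_sub_cancel' hdk]

end Phi

section FirstNonzero

variable {n : ℕ}

def IsFirstNonzero (V : Fin n → ℕ) (P : Fin n) : Prop :=
  V P ≠ 0 ∧ ∀ q < P, V q = 0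

lemma IsFirstNonzero.eq {V : Fin n → ℕ} {P q : Fin n} (hP : IsFirstNonzero V P)
    (hq : IsFirstNonzero V q) : q = P :=
  le_antisymm (not_lt.1 fun h => hP.1 (hq.2 P h)) (not_lt.1 fun h => hq.1 (hP.2 q h))

lemma IsFirstNonzero.comp_succAbove {V : Fin (n + 1) → ℕ} {P j : Fin (n + 1)}
    (h : IsFirstNonzero V P) (hj : P < j) :
    IsFirstNonzero (V ∘ j.succAbove) (P.castPred (Fin.ne_last_of_lt hj)) := by
  refine ⟨by simpa [Fin.succAbove_castPred_of_lt j P hj] using h.1, fun q hq => ?_⟩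
  have hqj : q.castSucc < j := by
    rw [Fin.lt_def] at hq hj ⊢
    simp only [Fin.coe_castPred, Fin.val_castSucc] at hq ⊢
    omega
  rw [Function.comp_apply, Fin.succAbove_of_castSucc_lt _ _ hqj]
  exact h.2 _ (by rw [Fin.lt_def] at hq ⊢; simpa using hq)

lemma lambda1_cons_zero {V : Fin n → ℕ} {P : Fin n} (h : IsFirstNonzero V P) (hP : Odd (P : ℕ)) :
    Lambda1 (Fin.cons 0 V : Fin (n + 1) → ℕ) := by
  refine ⟨rfl, fun j hj hmin => ?_⟩
  induction j using Fin.cases with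
  | zero => exact absurd rfl hj
  | succ q =>
    have hq : q = P := h.eq ⟨hj, fun q' hq' => by
      simpa using hmin q'.succ (Fin.succ_lt_succ_iff.2 hq')⟩
    simpa [hq] using hP.add_one

lemma lambda3_cons_one {V : Fin n → ℕ} {P : Fin n} (h : IsFirstNonzero V P)
    (hP : Even (P : ℕ)) (hP2 : 2 ≤ (P : ℕ)) :
    Lambda3 (Fin.cons 1 V : Fin (n + 1) → ℕ) := by
  refine ⟨rfl, fun j hj hj1 hmin => ?_⟩
  induction j using Fin.cases with
  | zero => simp at hj1
  | succ q =>
    have hq : q = P := h.eq ⟨hj, fun q' hq' => by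
      simpa using hmin q'.succ (by simp) (Fin.succ_lt_succ_iff.2 hq')⟩
    subst hq
    exact ⟨by simpa using hP.add_one, by rw [Fin.val_succ]; omega⟩

lemma exists_isFirstNonzero_of_not_lambda1 {I : Fin (n + 1) → ℕ} (h0 : I 0 = 0)
    (h : ¬ Lambda1 I) : ∃ P, IsFirstNonzero I P ∧ Odd (P : ℕ) := by
  simp only [Lambda1, h0, true_and, not_forall, Nat.not_even_iff_odd] at h
  obtain ⟨P, hP, hmin, hodd⟩ := h
  exact ⟨P, ⟨hP, hmin⟩, hodd⟩

lemma exists_isFirstNonzero_of_not_lambda3 {I : Fin (n + 2) → ℕ} (h0 : I 0 = 1) (h1 : I 1 = 0)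
    (h : ¬ Lambda3 I) :
    ∃ P, IsFirstNonzero (Fin.cons 0 (Fin.tail I) : Fin (n + 2) → ℕ) P ∧
      Even (P : ℕ) ∧ 2 ≤ (P : ℕ) := by
  simp only [Lambda3, h0, true_and, not_forall] at h
  obtain ⟨P, hP, hP1, hmin, hPodd⟩ := h
  have hP2 : 2 ≤ (P : ℕ) := by
    by_contra hlt
    exact hP (by rwa [show P = 1 from Fin.ext (by rw [Fin.val_one]; omega)])
  obtain ⟨P, rfl⟩ := Fin.exists_succ_eq.2 (Fin.pos_iff_ne_zero.1 hP1)
  refine ⟨P.succ, ⟨by simpa [Fin.tail] using hP, fun q hq => ?_⟩, ?_, hP2⟩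
  · induction q using Fin.cases with
    | zero => rfl
    | succ q => simpa [Fin.tail] using hmin q.succ (by simp) hq
  · rw [← Nat.not_odd_iff_even]
    intro hodd
    exact hPodd ⟨hodd, by rcases hodd with ⟨k, hk⟩; omega⟩

end FirstNonzero

section Tuples

variable {k : ℕ}

lemma pi_single_one_injective : Function.Injective fun i : Fin k => (Pi.single i 1 : Fin k → ℕ) :=
  fun i j hij => by simpa [Pi.single_apply, eq_comm] using congrFun hij j

lemma exists_eq_single_of_sum_eq_one {v : Fin k → ℕ} (h : ∑ i, v i = 1) :
    ∃ i, v = Pi.single i 1 := by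
  obtain ⟨i, hi⟩ : ∃ i, v i ≠ 0 := by
    by_contra! hv
    simp [hv] at h
  have hsplit := Finset.add_sum_erase Finset.univ v (Finset.mem_univ i)
  have hrest : ∀ j ∈ Finset.univ.erase i, v j = 0 := Finset.sum_eq_zero_iff.1 (by omega)
  refine ⟨i, funext fun j => ?_⟩
  rcases eq_or_ne j i with rfl | hj
  · simp only [Pi.single_eq_same]
    omega
  · rw [Pi.single_eq_of_ne hj, hrest j (Finset.mem_erase.2 ⟨hj, Finset.mem_univ j⟩)]

lemma antidiagonalTuple_one_right :
    Finset.Nat.antidiagonalTuple k 1 = Finset.univ.image fun i : Fin k => Pi.single i 1 := by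
  ext v
  simp only [Finset.Nat.mem_antidiagonalTuple, Finset.mem_image, Finset.mem_univ, true_and]
  constructor
  · intro h
    obtain ⟨i, rfl⟩ := exists_eq_single_of_sum_eq_one h
    exact ⟨i, rfl⟩
  · rintro ⟨i, rfl⟩
    simp

lemma multinomial_zero {α : Type*} (s : Finset α) : Nat.multinomial s 0 = 1 := by
  simpa using Nat.multinomial_spec s 0

lemma cons_comp_succ_succAbove {α : Type*} (c : α) (T : Fin (k + 1) → α) (j : Fin (k + 1)) :
    (Fin.cons c T : Fin (k + 2) → α) ∘ j.succ.succAbove = Fin.cons c (T ∘ j.succAbove) := by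
  funext i
  induction i using Fin.cases <;> simp

end Tuples

section Faces

variable {N : Type*} [AddCommGroup N] {k : ℕ}

def faceSum (c : ℕ) (T : Fin (k + 1) → ℕ) (m : (Fin (k + 1) → ℕ) → N) : N :=
  ∑ j : Fin (k + 1), (-1 : ℤ) ^ (j : ℕ) • if T j = 0 then m (Fin.cons c (T ∘ j.succAbove)) else 0

lemma comp_succAbove_eq_tail {T : Fin (k + 1) → ℕ} {j : Fin (k + 1)} (h : ∀ q ≤ j, T q = 0) :
    T ∘ j.succAbove = Fin.tail T := by
  funext l
  by_cases hl : l.castSucc < j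
  · rw [Function.comp_apply, Fin.succAbove_of_castSucc_lt _ _ hl, h _ hl.le, Fin.tail,
      h _ (Fin.castSucc_lt_iff_succ_le.1 hl)]
  · rw [Function.comp_apply, Fin.succAbove_of_le_castSucc _ _ (not_lt.1 hl), Fin.tail]

lemma sum_cons_comp_succAbove {T : Fin (k + 1) → ℕ} {j : Fin (k + 1)} (h : T j = 0) (c : ℕ) :
    ∑ i, (Fin.cons c (T ∘ j.succAbove) : Fin (k + 1) → ℕ) i = c + ∑ i, T i := by
  rw [Fin.sum_cons, Fin.sum_univ_succAbove T j, h, zero_add]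
  rfl

lemma sum_Iio_neg_one_pow {n : ℕ} (P : Fin n) :
    ∑ j ∈ Finset.Iio P, (-1 : ℤ) ^ (j : ℕ) = if Even (P : ℕ) then 0 else 1 := by
  rw [← neg_one_geom_sum, ← Nat.Iio_eq_range, ← Fin.map_valEmbedding_Iio, Finset.sum_map]
  rfl

lemma faceSum_eq_of_isFirstNonzero {T : Fin (k + 1) → ℕ} {P : Fin (k + 1)}
    (hP : IsFirstNonzero T P) (c : ℕ) (m : (Fin (k + 1) → ℕ) → N) :
    faceSum c T m = (if Even (P : ℕ) then 0 else m (Fin.cons c (Fin.tail T))) +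
      ∑ j ∈ Finset.Ioi P, (-1 : ℤ) ^ (j : ℕ) •
        if T j = 0 then m (Fin.cons c (T ∘ j.succAbove)) else 0 := by
  have hhead : ∀ j ∈ Finset.Iio P, ((-1 : ℤ) ^ (j : ℕ) •
      if T j = 0 then m (Fin.cons c (T ∘ j.succAbove)) else 0) =
        (-1 : ℤ) ^ (j : ℕ) • m (Fin.cons c (Fin.tail T)) := by
    intro j hj
    have hzero : ∀ q ≤ j, T q = 0 := fun q hq => hP.2 q (hq.trans_lt (Finset.mem_Iio.1 hj))
    rw [if_pos (hzero j le_rfl), comp_succAbove_eq_tail hzero]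
  rw [faceSum, Fintype.sum_eq_add_sum_compl P, if_neg hP.1, smul_zero, zero_add,
    ← Finset.Ioi_disjUnion_Iio, Finset.sum_disjUnion, add_comm, Finset.sum_congr rfl hhead,
    ← Finset.sum_smul, sum_Iio_neg_one_pow]
  split_ifs <;> simp

lemma sum_succ_faces_eq_faceSum (c : ℕ) (T : Fin (k + 1) → ℕ) (m : (Fin (k + 1) → ℕ) → N) :
    ∑ j : Fin (k + 1), (-1 : ℤ) ^ ((j : ℕ) + 1 + 1) •
      (if T j = 0 then m (fun i => (Fin.cons c T : Fin (k + 2) → ℕ) (j.succ.succAbove i)) else 0) =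
      faceSum c T m := by
  refine Finset.sum_congr rfl fun j _ => ?_
  rw [pow_succ, pow_succ, mul_assoc, neg_one_mul, neg_neg, mul_one, ← cons_comp_succ_succAbove]
  rfl

end Faces

section Delta

variable {R M : Type*} [CommRing R] [AddCommGroup M] [Module R M] (φ : Module.End R M) (a : R)
variable {k : ℕ}

lemma delta_cons_zero (m : (Fin (k + 1) → ℕ) → M) (T : Fin (k + 1) → ℕ) :
    delta φ a m (Fin.cons 0 T) = faceSum 0 T m := by
  rw [delta, Fin.cons_zero, Finset.Nat.antidiagonalTuple_zero_right, Finset.sum_singleton,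
    Fin.sum_univ_succ (n := k + 1)]
  simp only [Pi.zero_apply, Fin.cons_succ, Fin.cons_zero, zero_add, Finset.sum_const_zero,
    pow_zero, multinomial_zero, Nat.cast_one, mul_one, one_smul, Phi_zero, Module.End.one_apply,
    Fin.val_zero, if_true, Fin.succAbove_zero, Fin.val_succ]
  rw [pow_one, neg_one_smul, add_neg_cancel_left, sum_succ_faces_eq_faceSum]

lemma delta_cons_one (m : (Fin (k + 1) → ℕ) → M) (T : Fin (k + 1) → ℕ) :
    delta φ a m (Fin.cons 1 T) =
      Phi φ a (∑ i, T i) 1 (m T) - ∑ r, m (Pi.single r 1 + T) + faceSum 1 T m := by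
  have h0 : ∀ i : Fin (k + 1), (Pi.single 0 1 : Fin (k + 2) → ℕ) i.succ = 0 :=
    fun i => Pi.single_eq_of_ne (Fin.succ_ne_zero i) 1
  have h0' : ∀ r : Fin (k + 1), (Pi.single r.succ 1 : Fin (k + 2) → ℕ) 0 = 0 :=
    fun r => Pi.single_eq_of_ne (Fin.succ_ne_zero r).symm 1
  have hsucc : ∀ r i : Fin (k + 1),
      (Pi.single r.succ 1 : Fin (k + 2) → ℕ) i.succ = (Pi.single r 1 : Fin (k + 1) → ℕ) i := by
    intro r i
    simp [Pi.single_apply]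
  rw [delta, Fin.cons_zero, antidiagonalTuple_one_right,
    Finset.sum_image fun i _ j _ hij => pi_single_one_injective hij,
    Fin.sum_univ_succ (n := k + 1), Fin.sum_univ_succ (n := k + 1)]
  simp only [Nat.multinomial_single, Nat.cast_one, mul_one, Fin.cons_succ, Fin.cons_zero, h0, h0',
    hsucc, zero_add, Finset.sum_const_zero, pow_zero, one_smul, Phi_zero, Module.End.one_apply,
    one_ne_zero, if_false, smul_zero, Finset.sum_pi_single', Finset.mem_univ, if_true, pow_one,
    neg_one_smul, Fin.val_succ, Pi.single_eq_same, Finset.sum_neg_distrib, ← sub_eq_add_neg]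
  rw [sum_succ_faces_eq_faceSum]
  rfl

end Delta

section Span

variable {R M : Type*} [CommRing R] [AddCommGroup M] [Module R M] (φ : Module.End R M) (a : R)
  (s : ℕ)

abbrev Cocycle : Type _ := {m : (Fin (s + 2) → ℕ) → M // delta φ a m = 0}

def coeffLift (n : ℕ) (K : Fin (s + 2) → ℕ) (m : Cocycle φ a s) : M :=
  Phi φ a (∑ i, K i) (n - ∑ i, K i) (m.1 K)

def lambdaSpan (n : ℕ) : Submodule ℤ (Cocycle φ a s → M) :=
  Submodule.span ℤ (coeffLift φ a s n '' {K | LambdaAll K ∧ ∑ i, K i ≤ n})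

variable {φ a s}

lemma coeffLift_of_sum_eq {n : ℕ} {K : Fin (s + 2) → ℕ} (h : ∑ i, K i = n) (m : Cocycle φ a s) :
    coeffLift φ a s n K m = m.1 K := by
  simp [coeffLift, h]

lemma coeffLift_mem_lambdaSpan_of_lambdaAll {n : ℕ} {K : Fin (s + 2) → ℕ} (hK : LambdaAll K)
    (hn : ∑ i, K i ≤ n) : coeffLift φ a s n K ∈ lambdaSpan φ a s n :=
  Submodule.subset_span ⟨K, ⟨hK, hn⟩, rfl⟩

lemma coeffLift_mem_of_le {K : Fin (s + 2) → ℕ} {n : ℕ}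
    (hK : coeffLift φ a s (∑ i, K i) K ∈ lambdaSpan φ a s (∑ i, K i)) (hn : ∑ i, K i ≤ n) :
    coeffLift φ a s n K ∈ lambdaSpan φ a s n := by
  set k := ∑ i, K i
  let raise : (Cocycle φ a s → M) →ₗ[ℤ] Cocycle φ a s → M :=
    LinearMap.compLeft (Phi φ a k (n - k)).toAddMonoidHom.toIntLinearMap _
  have hraise : ∀ K' : Fin (s + 2) → ℕ, ∑ i, K' i ≤ k →
      raise (coeffLift φ a s k K') = coeffLift φ a s n K' := fun K' hK' => by
    funext m
    exact congrFun (congrArg DFunLike.coe (Phi_mul_Phi_of_le φ a hK' hn)) (m.1 K')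
  have hmap : (lambdaSpan φ a s k).map raise ≤ lambdaSpan φ a s n := by
    refine (Submodule.map_span_le _ _ _).2 ?_
    rintro _ ⟨K', ⟨hΛ, hK'⟩, rfl⟩
    rw [hraise K' hK']
    exact coeffLift_mem_lambdaSpan_of_lambdaAll hΛ (hK'.trans hn)
  rw [← hraise K le_rfl]
  exact hmap (Submodule.mem_map_of_mem hK)

lemma faceSum_coeffLift_apply {n c : ℕ} {T : Fin (s + 2) → ℕ} (hn : n = c + ∑ i, T i)
    (m : Cocycle φ a s) : faceSum c T (coeffLift φ a s n) m = faceSum c T m.1 := by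
  simp only [faceSum, Finset.sum_apply, Pi.smul_apply]
  refine Finset.sum_congr rfl fun j _ => ?_
  split_ifs with hj
  · rw [coeffLift_of_sum_eq (by rw [sum_cons_comp_succAbove hj, hn])]
  · rfl

variable (φ a s)

lemma faceSum_zero_coeffLift (T : Fin (s + 2) → ℕ) :
    faceSum 0 T (coeffLift φ a s (∑ i, T i)) = 0 := by
  funext m
  rw [faceSum_coeffLift_apply (zero_add _).symm, ← delta_cons_zero φ a, m.2, Pi.zero_apply,
    Pi.zero_apply]

lemma coeffLift_relation (T : Fin (s + 2) → ℕ) :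
    coeffLift φ a s (∑ i, T i + 1) T - ∑ r, coeffLift φ a s (∑ i, T i + 1) (Pi.single r 1 + T) +
      faceSum 1 T (coeffLift φ a s (∑ i, T i + 1)) = 0 := by
  funext m
  have hsingle : ∀ r, ∑ i, (Pi.single r 1 + T : Fin (s + 2) → ℕ) i = ∑ i, T i + 1 := fun r => by
    simp [Finset.sum_add_distrib, add_comm]
  simp only [Pi.add_apply, Pi.sub_apply, Finset.sum_apply, coeffLift_of_sum_eq (hsingle _),
    faceSum_coeffLift_apply (add_comm _ _)]
  rw [coeffLift, Nat.add_sub_cancel_left, ← delta_cons_one, m.2, Pi.zero_apply, Pi.zero_apply]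

end Span

section Induction

variable {R M : Type*} [CommRing R] [AddCommGroup M] [Module R M] {φ : Module.End R M} {a : R}
  {s : ℕ}

def degHead (K : Fin (s + 2) → ℕ) : ℕ ×ₗ ℕ :=
  toLex (∑ i, K i, K 0)

lemma degHead_lt_iff {K I : Fin (s + 2) → ℕ} :
    degHead K < degHead I ↔ ∑ i, K i < ∑ i, I i ∨ ∑ i, K i = ∑ i, I i ∧ K 0 < I 0 :=
  Prod.Lex.toLex_lt_toLex

lemma sum_le_of_degHead_lt {K I : Fin (s + 2) → ℕ} (h : degHead K < degHead I) :
    ∑ i, K i ≤ ∑ i, I i := by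
  rcases degHead_lt_iff.1 h with h | h
  exacts [h.le, h.1.le]

lemma sum_eq_head_add_sum_tail (I : Fin (s + 2) → ℕ) : ∑ i, I i = I 0 + ∑ i, Fin.tail I i :=
  Fin.sum_univ_succ I

lemma coeffLift_mem_of_head_eq_zero {I : Fin (s + 2) → ℕ} (h0 : I 0 = 0) (hΛ : ¬ LambdaAll I) :
    coeffLift φ a s (∑ i, I i) I ∈ lambdaSpan φ a s (∑ i, I i) := by
  obtain ⟨P, hP, hodd⟩ := exists_isFirstNonzero_of_not_lambda1 h0 (hΛ ∘ Or.inl)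
  have hrel := faceSum_zero_coeffLift φ a s I
  have hI : (Fin.cons 0 (Fin.tail I) : Fin (s + 2) → ℕ) = I := h0 ▸ Fin.cons_self_tail I
  rw [faceSum_eq_of_isFirstNonzero hP, if_neg (Nat.not_even_iff_odd.2 hodd), hI] at hrel
  rw [eq_neg_of_add_eq_zero_left hrel]
  refine neg_mem (Submodule.sum_mem _ fun j hj => Submodule.smul_of_tower_mem _ _ ?_)
  split_ifs with hj0
  · refine coeffLift_mem_lambdaSpan_of_lambdaAll (Or.inl (lambda1_cons_zero
      (hP.comp_succAbove (Finset.mem_Ioi.1 hj)) (by simpa using hodd))) ?_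
    rw [sum_cons_comp_succAbove hj0, zero_add]
  · exact zero_mem _

lemma coeffLift_mem_of_head_pos {I : Fin (s + 2) → ℕ} (h : 1 ≤ I 0)
    (hlower : ∀ K, degHead K < degHead I →
      coeffLift φ a s (∑ i, I i) K ∈ lambdaSpan φ a s (∑ i, I i))
    (hface : faceSum 1 (Fin.cons (I 0 - 1) (Fin.tail I)) (coeffLift φ a s (∑ i, I i)) ∈
      lambdaSpan φ a s (∑ i, I i)) :
    coeffLift φ a s (∑ i, I i) I ∈ lambdaSpan φ a s (∑ i, I i) := by
  set T : Fin (s + 2) → ℕ := Fin.cons (I 0 - 1) (Fin.tail I) with hT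
  have hdeg : ∑ i, T i + 1 = ∑ i, I i := by
    rw [hT, Fin.sum_cons, sum_eq_head_add_sum_tail I]
    omega
  have hI : Pi.single 0 1 + T = I := by
    funext i
    induction i using Fin.cases with
    | zero =>
      rw [Pi.add_apply, Pi.single_eq_same, hT, Fin.cons_zero]
      omega
    | succ i => simp [hT, Fin.tail]
  have hrel := coeffLift_relation φ a s T
  rw [hdeg] at hrel
  rw [Fin.sum_univ_succ (M := Cocycle φ a s → M), hI] at hrel
  have hI_eq : coeffLift φ a s (∑ i, I i) I = coeffLift φ a s (∑ i, I i) T -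
      ∑ r : Fin (s + 1), coeffLift φ a s (∑ i, I i) (Pi.single r.succ 1 + T) +
      faceSum 1 T (coeffLift φ a s (∑ i, I i)) := by
    rw [eq_comm, ← sub_eq_zero, ← hrel]
    abel
  rw [hI_eq]
  refine add_mem (sub_mem (hlower T ?_) (Submodule.sum_mem _ fun r _ => hlower _ ?_)) hface
  · exact degHead_lt_iff.2 (Or.inl (by omega))
  · refine degHead_lt_iff.2 (Or.inr ⟨?_, ?_⟩)
    · simp [Finset.sum_add_distrib, ← hdeg, add_comm]
    · rw [Pi.add_apply, Pi.single_eq_of_ne (Fin.succ_ne_zero r).symm, zero_add, hT, Fin.cons_zero]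
      omega

lemma coeffLift_mem_of_head_eq_one {I : Fin (s + 2) → ℕ} (h0 : I 0 = 1) (hΛ : ¬ LambdaAll I)
    (hlower : ∀ K, degHead K < degHead I →
      coeffLift φ a s (∑ i, I i) K ∈ lambdaSpan φ a s (∑ i, I i)) :
    coeffLift φ a s (∑ i, I i) I ∈ lambdaSpan φ a s (∑ i, I i) := by
  have h1 : I 1 = 0 := by
    by_contra h1
    exact hΛ (Or.inr (Or.inr ⟨h0, Nat.one_le_iff_ne_zero.2 h1⟩))
  obtain ⟨P, hP, heven, hP2⟩ :=
    exists_isFirstNonzero_of_not_lambda3 h0 h1 (hΛ ∘ Or.inr ∘ Or.inl)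
  refine coeffLift_mem_of_head_pos h0.ge hlower ?_
  rw [h0, Nat.sub_self, faceSum_eq_of_isFirstNonzero hP, if_pos heven, zero_add]
  refine Submodule.sum_mem _ fun j hj => Submodule.smul_of_tower_mem _ _ ?_
  split_ifs with hj0
  · refine coeffLift_mem_lambdaSpan_of_lambdaAll (Or.inr (Or.inl (lambda3_cons_one
      (hP.comp_succAbove (Finset.mem_Ioi.1 hj)) (by simpa using heven) (by simpa using hP2)))) ?_
    rw [sum_cons_comp_succAbove hj0, Fin.sum_cons, sum_eq_head_add_sum_tail I, h0, zero_add]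
  · exact zero_mem _

lemma coeffLift_mem_of_two_le_head {I : Fin (s + 2) → ℕ} (h2 : 2 ≤ I 0)
    (hlower : ∀ K, degHead K < degHead I →
      coeffLift φ a s (∑ i, I i) K ∈ lambdaSpan φ a s (∑ i, I i)) :
    coeffLift φ a s (∑ i, I i) I ∈ lambdaSpan φ a s (∑ i, I i) := by
  refine coeffLift_mem_of_head_pos (by omega) hlower
    (Submodule.sum_mem _ fun j _ => Submodule.smul_of_tower_mem _ _ ?_)
  split_ifs with hj0
  · refine hlower _ (degHead_lt_iff.2 (Or.inr ⟨?_, by rw [Fin.cons_zero]; omega⟩))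
    rw [sum_cons_comp_succAbove hj0, Fin.sum_cons, sum_eq_head_add_sum_tail I]
    omega
  · exact zero_mem _

lemma coeffLift_mem_of_lower {I : Fin (s + 2) → ℕ}
    (hlower : ∀ K, degHead K < degHead I →
      coeffLift φ a s (∑ i, I i) K ∈ lambdaSpan φ a s (∑ i, I i)) :
    coeffLift φ a s (∑ i, I i) I ∈ lambdaSpan φ a s (∑ i, I i) := by
  by_cases hΛ : LambdaAll I
  · exact coeffLift_mem_lambdaSpan_of_lambdaAll hΛ le_rfl
  rcases Nat.lt_trichotomy (I 0) 1 with h | h | h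
  · exact coeffLift_mem_of_head_eq_zero (by omega) hΛ
  · exact coeffLift_mem_of_head_eq_one h hΛ hlower
  · exact coeffLift_mem_of_two_le_head h hlower

theorem coeffLift_self_mem_lambdaSpan (I : Fin (s + 2) → ℕ) :
    coeffLift φ a s (∑ i, I i) I ∈ lambdaSpan φ a s (∑ i, I i) :=
  coeffLift_mem_of_lower fun K hK =>
    coeffLift_mem_of_le (coeffLift_self_mem_lambdaSpan K) (sum_le_of_degHead_lt hK)
termination_by degHead I
decreasing_by exact hK

end Induction

lemma sum_range_sum_antidiagonalTuple_eq_finsupp_sum {M : Type*} [AddCommGroup M] {k n : ℕ}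
    (l : (Fin k → ℕ) →₀ ℤ) (hl : ∀ K ∈ l.support, ∑ i, K i ≤ n) (g : ℕ → (Fin k → ℕ) → M) :
    ∑ d ∈ Finset.range (n + 1), ∑ K ∈ Finset.Nat.antidiagonalTuple k d, l K • g d K =
      l.sum fun K c => c • g (∑ i, K i) K := by
  classical
  rw [Finsupp.sum, ← Finset.sum_fiberwise_of_maps_to (g := fun K => ∑ i, K i)
    (t := Finset.range (n + 1)) fun K hK => Finset.mem_range.2 (Nat.lt_succ_of_le (hl K hK))]
  refine Finset.sum_congr rfl fun d _ => ?_
  calc ∑ K ∈ Finset.Nat.antidiagonalTuple k d, l K • g d K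
      = ∑ K ∈ l.support with ∑ i, K i = d, l K • g d K := by
        refine (Finset.sum_subset (fun K hK => ?_) fun K hKd hK => ?_).symm
        · exact Finset.Nat.mem_antidiagonalTuple.2 (Finset.mem_filter.1 hK).2
        · rw [Finsupp.notMem_support_iff.1 fun h =>
            hK (Finset.mem_filter.2 ⟨h, Finset.Nat.mem_antidiagonalTuple.1 hKd⟩), zero_smul]
    _ = ∑ K ∈ l.support with ∑ i, K i = d, l K • g (∑ i, K i) K :=
        Finset.sum_congr rfl fun K hK => by rw [(Finset.mem_filter.1 hK).2]

variable {R M : Type*} [CommRing R] [AddCommGroup M] [Module R M] (φ : Module.End R M) (a : R)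
  {s : ℕ}

lemma exists_finsupp_lambda_repr (I : Fin (s + 2) → ℕ) :
    ∃ l : (Fin (s + 2) → ℕ) →₀ ℤ,
      (∀ K ∈ l.support, LambdaAll K ∧ ∑ i, K i ≤ ∑ i, I i) ∧
      (∀ m : (Fin (s + 2) → ℕ) → M, delta φ a m = 0 →
        m I = l.sum fun K c => c • Phi φ a (∑ i, K i) (∑ i, I i - ∑ i, K i) (m K)) ∧
      (LambdaAll I → l = Finsupp.single I 1) := by
  by_cases hΛ : LambdaAll I
  · refine ⟨Finsupp.single I 1, fun K hK => ?_, fun m _ => ?_, fun _ => rfl⟩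
    · obtain rfl := Finset.mem_singleton.1 (Finsupp.support_single_subset hK)
      exact ⟨hΛ, le_rfl⟩
    · simp [Finsupp.sum_single_index]
  · obtain ⟨l, hl, hsum⟩ := (Finsupp.mem_span_image_iff_linearCombination ℤ).1
      (coeffLift_self_mem_lambdaSpan (φ := φ) (a := a) I)
    refine ⟨l, fun K hK => hl hK, fun m hm => ?_, fun h => absurd h hΛ⟩
    have h := congrFun hsum ⟨m, hm⟩
    rw [coeffLift_of_sum_eq rfl, Finsupp.linearCombination_apply] at h
    simpa only [Finsupp.sum, Finset.sum_apply, Pi.smul_apply, coeffLift] using h.symm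

end CechAlexander

/-- Proposition 9.8 of the paper: every coefficient `m_I` of an element of the
kernel of `δ^t` is `Σ_{K∈Λ^t,|K|≤|I|} z_{I,K}·Φ_{|K|,|I|−|K|}(m_K)` for integers `z` depending
only on `t` and `I`, with `z` the indicator of `I` when `I ∈ Λ^t`. (The paper's dimension
`t ≥ 2` is encoded as `s + 2` for `s : ℕ`.) -/
theorem statement14 {R M : Type*} [CommRing R] [AddCommGroup M] [Module R M]
    (φ : Module.End R M) (a : R) (s : ℕ) (I : Fin (s + 2) → ℕ) :
    ∃ z : (Fin (s + 2) → ℕ) → ℤ,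
      (∀ K, ¬ LambdaAll K → z K = 0) ∧
      (∀ K : Fin (s + 2) → ℕ, (∑ i, I i) < (∑ i, K i) → z K = 0) ∧
      (∀ m : (Fin (s + 2) → ℕ) → M, delta φ a m = 0 →
        m I = ∑ d ∈ Finset.range ((∑ i, I i) + 1),
          ∑ K ∈ Finset.Nat.antidiagonalTuple (s + 2) d,
            z K • (Phi φ a d ((∑ i, I i) - d)) (m K)) ∧
      (LambdaAll I → z I = 1 ∧ ∀ K ≠ I, z K = 0) := by
  obtain ⟨l, hsupp, hrepr, hsingle⟩ := CechAlexander.exists_finsupp_lambda_repr φ a I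
  refine ⟨l, fun K hK => ?_, fun K hK => ?_, fun m hm => ?_, fun hI => ?_⟩
  · exact Finsupp.notMem_support_iff.1 fun h => hK (hsupp K h).1
  · exact Finsupp.notMem_support_iff.1 fun h => (hsupp K h).2.not_gt hK
  · rw [hrepr m hm, CechAlexander.sum_range_sum_antidiagonalTuple_eq_finsupp_sum l
      fun K hK => (hsupp K hK).2]
  · rw [hsingle hI]
    exact ⟨Finsupp.single_eq_same, fun K hK => Finsupp.single_eq_of_ne hK⟩
end

section
/- For every commutative ring R, all elements y, a ∈ R, and all integers c ≥ 0 and r ≥ 0, one has ∏_{h=0}^{r-1}(y − (c+h)·a) = Σ_{k=0}^{r} c(c,k) · a^k · (r!/(r−k)!) · ∏_{i=0}^{r−k−1}(y − i·a) in R. -/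
open Finset in
/-- Vandermonde-type identity for `a`-step falling factorials. -/
lemma vand_aux15 {R : Type*} [CommRing R] (u v a : R) (r : ℕ) :
    ∏ i ∈ range r, (u + v - (i : R) * a) =
      ∑ k ∈ range (r + 1), (r.choose k : R) *
        ((∏ i ∈ range k, (u - (i : R) * a)) * ∏ j ∈ range (r - k), (v - (j : R) * a)) := by
  induction r with
  | zero => simp
  | succ r ih =>
    rw [Finset.prod_range_succ, ih, Finset.sum_mul]
    have key : ∀ k ∈ range (r + 1),
        (r.choose k : R) *
          ((∏ i ∈ range k, (u - (i : R) * a)) * ∏ j ∈ range (r - k), (v - (j : R) * a)) *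
          (u + v - (r : R) * a)
        = (r.choose k : R) *
            ((∏ i ∈ range (k+1), (u - (i : R) * a)) * ∏ j ∈ range (r - k), (v - (j : R) * a))
          + (r.choose k : R) *
            ((∏ i ∈ range k, (u - (i : R) * a)) * ∏ j ∈ range (r + 1 - k), (v - (j : R) * a)) := by
      intro k hk
      have hk' : k ≤ r := Nat.lt_succ_iff.mp (Finset.mem_range.mp hk)
      rw [Finset.prod_range_succ, Nat.succ_sub hk', Finset.prod_range_succ]
      have hcast : ((r - k : ℕ) : R) = (r : R) - (k : R) := by
        push_cast [Nat.cast_sub hk']; ring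
      rw [hcast]
      ring
    rw [Finset.sum_congr rfl key, Finset.sum_add_distrib]
    have h1 : ∑ k ∈ range (r + 2), ((r+1).choose k : R) *
        ((∏ i ∈ range k, (u - (i : R) * a)) * ∏ j ∈ range (r + 1 - k), (v - (j : R) * a))
      = (∏ j ∈ range (r + 1), (v - (j : R) * a))
        + ∑ k ∈ range (r + 1), ((r.choose k : R) + (r.choose (k+1) : R)) *
          ((∏ i ∈ range (k+1), (u - (i : R) * a)) * ∏ j ∈ range (r - k), (v - (j : R) * a)) := by
      rw [Finset.sum_range_succ' _ (r+1)]
      simp only [Nat.choose_succ_succ, Nat.cast_add, Nat.choose_zero_right, Nat.cast_one,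
        Nat.succ_sub_succ_eq_sub]
      simp [add_comm]
    rw [h1]
    simp only [add_mul, Finset.sum_add_distrib]
    have h2 : (∏ j ∈ range (r + 1), (v - (j : R) * a))
        + ∑ k ∈ range (r + 1), (r.choose (k+1) : R) *
          ((∏ i ∈ range (k+1), (u - (i : R) * a)) * ∏ j ∈ range (r - k), (v - (j : R) * a))
      = ∑ k ∈ range (r + 1), (r.choose k : R) *
          ((∏ i ∈ range k, (u - (i : R) * a)) * ∏ j ∈ range (r + 1 - k), (v - (j : R) * a)) := by
      rw [Finset.sum_range_succ' (fun k => (r.choose k : R) *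
          ((∏ i ∈ range k, (u - (i : R) * a)) * ∏ j ∈ range (r + 1 - k), (v - (j : R) * a))) r]
      simp [Nat.succ_sub_succ_eq_sub, add_comm]
      rw [Finset.sum_range_succ]
      simp
    rw [← h2]
    ring

open Finset in
/-- `∏_{i<k}(-c·a - i·a) = (-1)^k a^k · c^{(k)}`. -/
lemma Fk_aux15 {R : Type*} [CommRing R] (a : R) (c k : ℕ) :
    ∏ i ∈ range k, (-(c : R) * a - (i : R) * a) =
      (-1) ^ k * a ^ k * (c.ascFactorial k : R) := by
  induction k with
  | zero => simp
  | succ k ih =>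
    rw [Finset.prod_range_succ, ih, Nat.ascFactorial_succ]
    push_cast
    ring

/-- The key integer identity relating `cCoeff` to binomials and ascending factorials. -/
lemma intId_aux15 (c r k : ℕ) :
    cCoeff c k * (r.descFactorial k : ℤ) =
      (-1) ^ k * (r.choose k : ℤ) * (c.ascFactorial k : ℤ) := by
  rcases c with _ | s
  · rcases k with _ | k
    · simp [cCoeff]
    · simp [cCoeff, Nat.zero_ascFactorial]
  · have h1 : (s+1).ascFactorial k = k.factorial * (s + 1 + k - 1).choose k :=
      Nat.ascFactorial_eq_factorial_mul_choose' _ _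
    have h2 : r.descFactorial k = k.factorial * r.choose k :=
      Nat.descFactorial_eq_factorial_mul_choose _ _
    rw [cCoeff, if_neg (Nat.succ_ne_zero s), h1, h2]
    push_cast
    ring

open Finset in
/-- the coefficientwise form of `(1+aX)^{(Y−ca)/a} = (1+aX)^{Y/a}·(1+aX)^{−c}`:
`∏_{h=0}^{r-1}(y − (c+h)·a) = Σ_{k=0}^{r} c(c,k)·a^k·(r!/(r−k)!)·∏_{i=0}^{r−k−1}(y − i·a)`. -/
theorem statement15 {R : Type*} [CommRing R] (y a : R) (c r : ℕ) :
    ∏ h ∈ Finset.range r, (y - ((c + h : ℕ) : R) * a) =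
      ∑ k ∈ Finset.range (r + 1),
        cCoeff c k • (a ^ k * (r.descFactorial k : R) *
          ∏ i ∈ Finset.range (r - k), (y - (i : R) * a)) := by
  have hL : ∀ h : ℕ, y - ((c + h : ℕ) : R) * a = (-(c:R)*a) + y - (h : R) * a := by
    intro h; push_cast; ring
  calc ∏ h ∈ Finset.range r, (y - ((c + h : ℕ) : R) * a)
      = ∏ h ∈ Finset.range r, ((-(c:R)*a) + y - (h : R) * a) := by
        exact Finset.prod_congr rfl fun h _ => hL h
    _ = ∑ k ∈ range (r + 1), (r.choose k : R) *
          ((∏ i ∈ range k, (-(c:R)*a - (i : R) * a)) * ∏ j ∈ range (r - k), (y - (j : R) * a)) :=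
        vand_aux15 _ _ _ _
    _ = _ := by
        refine Finset.sum_congr rfl fun k _ => ?_
        rw [Fk_aux15, zsmul_eq_mul]
        have := intId_aux15 c r k
        have hcast : (cCoeff c k : R) * (r.descFactorial k : R) =
            (-1) ^ k * (r.choose k : R) * (c.ascFactorial k : R) := by
          exact_mod_cast congrArg (fun z : ℤ => (z : R)) this
        push_cast at hcast ⊢
        linear_combination (-(∏ j ∈ range (r - k), (y - (j : R) * a)) * a ^ k) * hcast
end
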